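/- arXiv:1512.04563 — 10 statements merged into one kernel-verified Lean document; each statement's English description precedes it below -/
import Mathlib

section
/- Let c < d, set m = (c+d)/2, and let φ₁, φ₂, φ₃ be the standard quadratic Lagrange basis functions on [c,d] associated with the nodes c, m, d (so φᵢ is a quadratic polynomial with φᵢ(node_l) = δ_{il}). Let β be continuous on [c,d], let f be continuous on [c,d], and let p_h be continuously differentiable on [c,d] satisfying the discrete equation ∫_c^d β p_h' φ₂' dx = ∫_c^d f φ₂ dx. Define the recovered fluxes u_h(d) := -∫_c^d β p_h' φ₃' dx + ∫_c^d f φ₃ dx and u_h(c) := ∫_c^d β p_h' φ₁' dx - ∫_c^d f φ₁ dx. Then u_h(d) - u_h(c) = ∫_c^d f(x) dx. -/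
open Set intervalIntegral

/-! The three quadratic Lagrange basis functions form a partition of unity, so their derivatives
sum to zero. Adding the defining integrals of `u_h(d)` and `-u_h(c)` to the discrete equation
therefore leaves `∫ β p_h' (φ₁' + φ₂' + φ₃') = 0` on one side and `∫ f (φ₁ + φ₂ + φ₃) = ∫ f`
on the other. -/

theorem quadratic_lagrange_basis_sum {a b e : ℝ} (hab : a ≠ b) (hae : a ≠ e) (hbe : b ≠ e)
    (x : ℝ) :
    (x - b) * (x - e) / ((a - b) * (a - e)) + (x - a) * (x - e) / ((b - a) * (b - e))
      + (x - a) * (x - b) / ((e - a) * (e - b)) = 1 := by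
  field_simp
  ring

theorem deriv_add_add_eq_zero_of_add_add_eq_const {f g h : ℝ → ℝ} {k : ℝ}
    (hf : Differentiable ℝ f) (hg : Differentiable ℝ g) (hh : Differentiable ℝ h)
    (hsum : ∀ x, f x + g x + h x = k) (x : ℝ) :
    deriv f x + deriv g x + deriv h x = 0 := by
  have hconst : (fun x => f x + g x + h x) = fun _ => k := funext hsum
  rw [← deriv_add (hf x) (hg x), ← deriv_add ((hf.add hg) x) (hh x)]
  exact (congrArg (deriv · x) hconst).trans (deriv_const x k)

theorem integral_mul_add_add_of_add_add_eq_const {a b k : ℝ} {g ψ₁ ψ₂ ψ₃ : ℝ → ℝ}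
    (hg : IntervalIntegrable g MeasureTheory.volume a b)
    (h₁ : ContinuousOn ψ₁ (uIcc a b)) (h₂ : ContinuousOn ψ₂ (uIcc a b))
    (h₃ : ContinuousOn ψ₃ (uIcc a b)) (hsum : ∀ x ∈ uIcc a b, ψ₁ x + ψ₂ x + ψ₃ x = k) :
    (∫ x in a..b, g x * ψ₁ x) + (∫ x in a..b, g x * ψ₂ x) + (∫ x in a..b, g x * ψ₃ x)
      = k * ∫ x in a..b, g x := by
  rw [← integral_add (hg.mul_continuousOn h₁) (hg.mul_continuousOn h₂),
    ← integral_add ((hg.mul_continuousOn h₁).add (hg.mul_continuousOn h₂))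
      (hg.mul_continuousOn h₃), ← integral_const_mul]
  refine integral_congr fun x hx => ?_
  simp only [← hsum x hx]
  ring

theorem stmt_3_general (c d : ℝ) (hcd : c < d)
    (β f ph' : ℝ → ℝ)
    (hβ : ContinuousOn β (Icc c d)) (hf : ContinuousOn f (Icc c d))
    (hph'c : ContinuousOn ph' (Icc c d)) :
    let m := (c + d) / 2
    let φ₁ : ℝ → ℝ := fun x => ((x - m) * (x - d)) / ((c - m) * (c - d))
    let φ₂ : ℝ → ℝ := fun x => ((x - c) * (x - d)) / ((m - c) * (m - d))
    let φ₃ : ℝ → ℝ := fun x => ((x - c) * (x - m)) / ((d - c) * (d - m))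
    -- discrete equation tested with the midpoint basis function:
    (∫ x in c..d, β x * ph' x * deriv φ₂ x) = (∫ x in c..d, f x * φ₂ x) →
    -- conclusion: u_h(d) - u_h(c) = ∫_c^d f
    ((-∫ x in c..d, β x * ph' x * deriv φ₃ x) + ∫ x in c..d, f x * φ₃ x)
      - ((∫ x in c..d, β x * ph' x * deriv φ₁ x) - ∫ x in c..d, f x * φ₁ x)
      = ∫ x in c..d, f x := by
  intro m φ₁ φ₂ φ₃ hdisc
  have hcm : c < m := by simp only [m]; linarith
  have hmd : m < d := by simp only [m]; linarith
  have hφ : ∀ x, φ₁ x + φ₂ x + φ₃ x = 1 :=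
    quadratic_lagrange_basis_sum hcm.ne hcd.ne hmd.ne
  have hsmooth₁ : ContDiff ℝ 1 φ₁ := by fun_prop
  have hsmooth₂ : ContDiff ℝ 1 φ₂ := by fun_prop
  have hsmooth₃ : ContDiff ℝ 1 φ₃ := by fun_prop
  have hdφ : ∀ x, deriv φ₁ x + deriv φ₂ x + deriv φ₃ x = 0 :=
    deriv_add_add_eq_zero_of_add_add_eq_const (hsmooth₁.differentiable one_ne_zero)
      (hsmooth₂.differentiable one_ne_zero) (hsmooth₃.differentiable one_ne_zero) hφ
  have hflux := integral_mul_add_add_of_add_add_eq_const (g := fun x => β x * ph' x)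
    ((hβ.mul hph'c).intervalIntegrable_of_Icc hcd.le)
    (hsmooth₁.continuous_deriv le_rfl).continuousOn
    (hsmooth₂.continuous_deriv le_rfl).continuousOn
    (hsmooth₃.continuous_deriv le_rfl).continuousOn fun x _ => hdφ x
  have hsource := integral_mul_add_add_of_add_add_eq_const
    (hf.intervalIntegrable_of_Icc hcd.le) (by fun_prop) (by fun_prop) (by fun_prop)
    fun x _ => hφ x
  linarith

/-- Discrete conservation law for the recovered flux: with the quadratic Lagrange
basis `φ₁, φ₂, φ₃` on `[c,d]` (nodes `c`, `(c+d)/2`, `d`) and the discrete equation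
tested with `φ₂`, the recovered fluxes satisfy `u_h(d) - u_h(c) = ∫_c^d f`. -/
theorem stmt_3 (c d : ℝ) (hcd : c < d)
    (β f ph ph' : ℝ → ℝ)
    (hβ : ContinuousOn β (Icc c d)) (hf : ContinuousOn f (Icc c d))
    (hph : ∀ x ∈ Icc c d, HasDerivWithinAt ph (ph' x) (Icc c d) x)
    (hph'c : ContinuousOn ph' (Icc c d)) :
    let m := (c + d) / 2
    let φ₁ : ℝ → ℝ := fun x => ((x - m) * (x - d)) / ((c - m) * (c - d))
    let φ₂ : ℝ → ℝ := fun x => ((x - c) * (x - d)) / ((m - c) * (m - d))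
    let φ₃ : ℝ → ℝ := fun x => ((x - c) * (x - m)) / ((d - c) * (d - m))
    -- discrete equation tested with the midpoint basis function:
    (∫ x in c..d, β x * ph' x * deriv φ₂ x) = (∫ x in c..d, f x * φ₂ x) →
    -- conclusion: u_h(d) - u_h(c) = ∫_c^d f
    ((-∫ x in c..d, β x * ph' x * deriv φ₃ x) + ∫ x in c..d, f x * φ₃ x)
      - ((∫ x in c..d, β x * ph' x * deriv φ₁ x) - ∫ x in c..d, f x * φ₁ x)
      = ∫ x in c..d, f x :=
  stmt_3_general c d hcd β f ph' hβ hf hph'c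
end

section
/- Let x1 < x2 < x3 with x2 = (x1+x3)/2, let α ∈ (x1,x3), let ρ > 0, and assume D := (α-x1)(x2-x1) + (α-x1)(x3-α) + ρ(α-x2)(α-x3) ≠ 0. Then the three quadratic IFE basis functions on the interface element satisfy the partition of unity φ1(x) + φ2(x) + φ3(x) = 1 for every x ∈ (x1,α) and for every x ∈ (α,x3). -/
open Set

/-! Over the common denominator `D (x3 - x2)` (times `ρ` on `(x1, α)`), each partition-of-unity
identity becomes a polynomial identity in `x` and the parameters. -/

section Field

variable {K : Type*} [Field K] {D h p q r : K}

theorem div_add_div_add_div_eq_one (hD : D ≠ 0) (hh : h ≠ 0) (hsum : h * p + q + r = D * h) :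
    p / D + q / (D * h) + r / (D * h) = 1 := by
  field_simp
  linear_combination hsum

theorem div_add_one_add_div_add_div_eq_one (hD : D ≠ 0) (hh : h ≠ 0) (hsum : h * p + q + r = 0) :
    p / D + 1 + q / (D * h) + r / (D * h) = 1 := by
  field_simp
  linear_combination hsum

end Field

section QuadraticIFE

variable {R : Type*} [CommRing R] (x x1 x2 x3 α ρ : R)

theorem quadIFE_left_numerators_sum :
    ρ * (x3 - x2) * ((x - (x2 + x3 - x1)) * (x - x1))
      + ((x1 - α) * (x - α) * (x - x1) - ρ * (x3 - α) * (x - x1) * (x - (α + x3 - x1)))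
      + ((α - x1) * (x - α) * (x - x1) - ρ * (α - x2) * (x - x1) * (x - (α + x2 - x1))) = 0 := by
  ring

theorem quadIFE_right_numerators_sum :
    (x3 - x2) * (ρ * (x - x2) * (x - x3))
      + ((x1 - α) * (x - x3) * (x + (x3 - α - x1)) - ρ * (x3 - α) * (x - α) * (x - x3))
      + ((α - x1) * (x - x2) * (x - (α + x1 - x2)) - ρ * (α - x2) * (x - α) * (x - x2))
      = ((α - x1) * (x2 - x1) + (α - x1) * (x3 - α) + ρ * (α - x2) * (α - x3)) * (x3 - x2) := by
  ring

end QuadraticIFE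

theorem stmt_4_general (x1 x2 x3 α ρ : ℝ) (h23 : x2 < x3)
    (hρ : 0 < ρ)
    (hD : (α - x1) * (x2 - x1) + (α - x1) * (x3 - α) + ρ * (α - x2) * (α - x3) ≠ 0) :
    let D := (α - x1) * (x2 - x1) + (α - x1) * (x3 - α) + ρ * (α - x2) * (α - x3)
    (∀ x ∈ Ioo x1 α,
        (((x - (x2 + x3 - x1)) * (x - x1)) / D + 1)
          + ((x1 - α) * (x - α) * (x - x1)
              - ρ * (x3 - α) * (x - x1) * (x - (α + x3 - x1))) / (D * ρ * (x3 - x2))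
          + ((α - x1) * (x - α) * (x - x1)
              - ρ * (α - x2) * (x - x1) * (x - (α + x2 - x1))) / (D * ρ * (x3 - x2)) = 1)
    ∧ (∀ x ∈ Ioo α x3,
        (ρ * (x - x2) * (x - x3)) / D
          + ((x1 - α) * (x - x3) * (x + (x3 - α - x1))
              - ρ * (x3 - α) * (x - α) * (x - x3)) / (D * (x3 - x2))
          + ((α - x1) * (x - x2) * (x - (α + x1 - x2))
              - ρ * (α - x2) * (x - α) * (x - x2)) / (D * (x3 - x2)) = 1) := by
  have hh : x3 - x2 ≠ 0 := (sub_pos.2 h23).ne'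
  refine ⟨fun x _ => ?_, fun x _ => ?_⟩
  · rw [mul_assoc _ ρ]
    exact div_add_one_add_div_add_div_eq_one hD (mul_ne_zero hρ.ne' hh)
      (quadIFE_left_numerators_sum x x1 x2 x3 α ρ)
  · exact div_add_div_add_div_eq_one hD hh (quadIFE_right_numerators_sum x x1 x2 x3 α ρ)

/-- Partition of unity for the quadratic IFE basis functions on the interface
element: `φ1 + φ2 + φ3 = 1` on `(x1,α)` and on `(α,x3)`. -/
theorem stmt_4 (x1 x2 x3 α ρ : ℝ) (h12 : x1 < x2) (h23 : x2 < x3)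
    (hmid : x2 = (x1 + x3) / 2) (hα : α ∈ Ioo x1 x3) (hρ : 0 < ρ)
    (hD : (α - x1) * (x2 - x1) + (α - x1) * (x3 - α) + ρ * (α - x2) * (α - x3) ≠ 0) :
    let D := (α - x1) * (x2 - x1) + (α - x1) * (x3 - α) + ρ * (α - x2) * (α - x3)
    (∀ x ∈ Ioo x1 α,
        (((x - (x2 + x3 - x1)) * (x - x1)) / D + 1)
          + ((x1 - α) * (x - α) * (x - x1)
              - ρ * (x3 - α) * (x - x1) * (x - (α + x3 - x1))) / (D * ρ * (x3 - x2))
          + ((α - x1) * (x - α) * (x - x1)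
              - ρ * (α - x2) * (x - x1) * (x - (α + x2 - x1))) / (D * ρ * (x3 - x2)) = 1)
    ∧ (∀ x ∈ Ioo α x3,
        (ρ * (x - x2) * (x - x3)) / D
          + ((x1 - α) * (x - x3) * (x + (x3 - α - x1))
              - ρ * (x3 - α) * (x - α) * (x - x3)) / (D * (x3 - x2))
          + ((α - x1) * (x - x2) * (x - (α + x1 - x2))
              - ρ * (α - x2) * (x - α) * (x - x2)) / (D * (x3 - x2)) = 1) :=
  stmt_4_general x1 x2 x3 α ρ h23 hρ hD
end

section
/- Let β⁻, β⁺ > 0 and set ρ = β⁻/β⁺. Let x1 < x2 < x3 with x2 = (x1+x3)/2, let α ∈ (x1,x2), and assume D := (α-x1)(x2-x1) + (α-x1)(x3-α) + ρ(α-x2)(α-x3) ≠ 0. Then the IFE basis function φ1 satisfies: (a) the nodal conditions φ1(x1) = 1, φ1(x2) = 0, φ1(x3) = 0; (b) the matching conditions at the interface: φ1(α⁻) = φ1(α⁺), β⁻ φ1'(α⁻) = β⁺ φ1'(α⁺), and β⁻ φ1''(α⁻) = β⁺ φ1''(α⁺), where one-sided values are taken from the two quadratic branches. -/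
/-!
Both branches of `φ1` are quadratics with the same axis of symmetry `x = (x2 + x3) / 2`, with
leading coefficients `1 / D` and `ρ / D`. Since `βm = βp ρ`, the fluxes `β φ1'` and `β φ1''` of
the two branches therefore agree everywhere, not only at `α`; continuity at `α` is exactly the
identity that defines `D`.
-/

section Quadratic

variable (c a b e : ℝ)

theorem hasDerivAt_const_mul_sub_mul_sub_add (x : ℝ) :
    HasDerivAt (fun x => c * ((x - a) * (x - b)) + e) (c * (2 * x - a - b)) x := by
  have h := (((hasDerivAt_id' x).sub_const a).mul ((hasDerivAt_id' x).sub_const b)).const_mul c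
  exact (h.add_const e).congr_deriv (by ring)

theorem deriv_const_mul_sub_mul_sub_add :
    deriv (fun x => c * ((x - a) * (x - b)) + e) = fun x => c * (2 * x - a - b) :=
  funext fun x => (hasDerivAt_const_mul_sub_mul_sub_add c a b e x).deriv

theorem deriv_deriv_const_mul_sub_mul_sub_add :
    deriv (deriv fun x => c * ((x - a) * (x - b)) + e) = fun _ => 2 * c := by
  rw [deriv_const_mul_sub_mul_sub_add]
  funext x
  have h := ((((hasDerivAt_id' x).const_mul 2).sub_const a).sub_const b).const_mul c
  rw [h.deriv]
  ring

end Quadratic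

theorem stmt_5_general (βm βp x1 x2 x3 α : ℝ) (hβp : 0 < βp) :
    let ρ := βm / βp
    let D := (α - x1) * (x2 - x1) + (α - x1) * (x3 - α) + ρ * (α - x2) * (α - x3)
    D ≠ 0 →
    let φm : ℝ → ℝ := fun x => ((x - (x2 + x3 - x1)) * (x - x1)) / D + 1
    let φp : ℝ → ℝ := fun x => ρ * (x - x2) * (x - x3) / D
    -- (a) nodal conditions
    φm x1 = 1 ∧ φp x2 = 0 ∧ φp x3 = 0 ∧
    -- (b) matching conditions at the interface
    φm α = φp α ∧
    βm * deriv φm α = βp * deriv φp α ∧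
    βm * deriv (deriv φm) α = βp * deriv (deriv φp) α := by
  intro ρ D hD φm φp
  have hρ : βm = βp * ρ := (mul_div_cancel₀ βm hβp.ne').symm
  have hm : φm = fun x => D⁻¹ * ((x - (x2 + x3 - x1)) * (x - x1)) + 1 := by
    funext x; simp only [φm]; ring
  have hp : φp = fun x => ρ / D * ((x - x2) * (x - x3)) + 0 := by
    funext x; simp only [φp]; ring
  refine ⟨by simp [φm], by simp [φp], by simp [φp], ?_, ?_, ?_⟩
  · simp only [φm, φp]
    rw [div_add_one hD]
    congr 1
    ring
  · rw [hm, hp, deriv_const_mul_sub_mul_sub_add, deriv_const_mul_sub_mul_sub_add, hρ]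
    ring
  · rw [hm, hp, deriv_deriv_const_mul_sub_mul_sub_add, deriv_deriv_const_mul_sub_mul_sub_add, hρ]
    ring

/-- Nodal and interface matching conditions for the quadratic IFE basis function `φ1`
(with left branch `φm` on `(x1,α)` and right branch `φp` on `(α,x3)`). -/
theorem stmt_5 (βm βp x1 x2 x3 α : ℝ) (hβm : 0 < βm) (hβp : 0 < βp)
    (h12 : x1 < x2) (h23 : x2 < x3) (hmid : x2 = (x1 + x3) / 2)
    (hα : α ∈ Set.Ioo x1 x2) :
    let ρ := βm / βp
    let D := (α - x1) * (x2 - x1) + (α - x1) * (x3 - α) + ρ * (α - x2) * (α - x3)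
    D ≠ 0 →
    let φm : ℝ → ℝ := fun x => ((x - (x2 + x3 - x1)) * (x - x1)) / D + 1
    let φp : ℝ → ℝ := fun x => ρ * (x - x2) * (x - x3) / D
    -- (a) nodal conditions
    φm x1 = 1 ∧ φp x2 = 0 ∧ φp x3 = 0 ∧
    -- (b) matching conditions at the interface
    φm α = φp α ∧
    βm * deriv φm α = βp * deriv φp α ∧
    βm * deriv (deriv φm) α = βp * deriv (deriv φp) α :=
  stmt_5_general βm βp x1 x2 x3 α hβp
end

section
/- Let β⁻, β⁺ > 0 and set ρ = β⁻/β⁺. Let x1 < x2 < x3 with x2 = (x1+x3)/2, let α ∈ (x1,x2), and assume D := (α-x1)(x2-x1) + (α-x1)(x3-α) + ρ(α-x2)(α-x3) ≠ 0. Then the IFE basis function φ2 satisfies: (a) the nodal conditions φ2(x1) = 0, φ2(x2) = 1, φ2(x3) = 0; (b) the matching conditions at the interface: φ2(α⁻) = φ2(α⁺), β⁻ φ2'(α⁻) = β⁺ φ2'(α⁺), and β⁻ φ2''(α⁻) = β⁺ φ2''(α⁺), where one-sided values are taken from the two quadratic branches. -/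
theorem mul_deriv_eq_of_mul_eq_add_const {𝕜 : Type*} [NontriviallyNormedField 𝕜] {f g : 𝕜 → 𝕜}
    {a b c : 𝕜} (h : ∀ x, a * f x = b * g x + c) (x : 𝕜) :
    a * deriv f x = b * deriv g x := by
  rw [← deriv_const_mul_field, ← deriv_const_mul_field, funext h, deriv_add_const]

theorem mul_deriv_deriv_eq_of_mul_eq_add_const {𝕜 : Type*} [NontriviallyNormedField 𝕜]
    {f g : 𝕜 → 𝕜} {a b c : 𝕜} (h : ∀ x, a * f x = b * g x + c) (x : 𝕜) :
    a * deriv (deriv f) x = b * deriv (deriv g) x :=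
  mul_deriv_eq_of_mul_eq_add_const (c := 0)
    (fun y => by rw [add_zero]; exact mul_deriv_eq_of_mul_eq_add_const h y) x

theorem stmt_6_general (βm βp x1 x2 x3 α : ℝ) (hβm : 0 < βm) (hβp : 0 < βp)
    (h23 : x2 < x3) (hmid : x2 = (x1 + x3) / 2) :
    let ρ := βm / βp
    let D := (α - x1) * (x2 - x1) + (α - x1) * (x3 - α) + ρ * (α - x2) * (α - x3)
    D ≠ 0 →
    let φm : ℝ → ℝ := fun x =>
      ((x1 - α) * (x - α) * (x - x1)
        - ρ * (x3 - α) * (x - x1) * (x - (α + x3 - x1))) / (D * ρ * (x3 - x2))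
    let φp : ℝ → ℝ := fun x =>
      ((x1 - α) * (x - x3) * (x + (x3 - α - x1))
        - ρ * (x3 - α) * (x - α) * (x - x3)) / (D * (x3 - x2))
    -- (a) nodal conditions
    φm x1 = 0 ∧ φp x2 = 1 ∧ φp x3 = 0 ∧
    -- (b) matching conditions at the interface
    φm α = φp α ∧
    βm * deriv φm α = βp * deriv φp α ∧
    βm * deriv (deriv φm) α = βp * deriv (deriv φp) α := by
  intro ρ D hD φm φp
  have hρ : ρ ≠ 0 := by positivity
  have h32 : x3 - x2 ≠ 0 := sub_ne_zero.2 h23.ne'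
  -- The two numerators have the same `x²` and `x` coefficients, so the fluxes differ by a constant.
  have hflux : ∀ x, βm * φm x =
      βp * φp x + βp * (ρ - 1) * (α - x1) * (x3 - α) * (x3 - x1) / (D * (x3 - x2)) := by
    intro x
    simp only [φm, φp, ρ]
    field_simp
    ring
  refine ⟨by simp [φm], ?_, by simp [φp], ?_, mul_deriv_eq_of_mul_eq_add_const hflux α,
    mul_deriv_deriv_eq_of_mul_eq_add_const hflux α⟩
  · rw [div_eq_one_iff_eq (mul_ne_zero hD h32)]
    simp only [D]
    rw [hmid]
    ring
  · simp only [φm, φp]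
    field_simp
    ring

/-- Nodal and interface matching conditions for the quadratic IFE basis function `φ2`
(with left branch `φm` on `(x1,α)` and right branch `φp` on `(α,x3)`). -/
theorem stmt_6 (βm βp x1 x2 x3 α : ℝ) (hβm : 0 < βm) (hβp : 0 < βp)
    (h12 : x1 < x2) (h23 : x2 < x3) (hmid : x2 = (x1 + x3) / 2)
    (hα : α ∈ Set.Ioo x1 x2) :
    let ρ := βm / βp
    let D := (α - x1) * (x2 - x1) + (α - x1) * (x3 - α) + ρ * (α - x2) * (α - x3)
    D ≠ 0 →
    let φm : ℝ → ℝ := fun x =>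
      ((x1 - α) * (x - α) * (x - x1)
        - ρ * (x3 - α) * (x - x1) * (x - (α + x3 - x1))) / (D * ρ * (x3 - x2))
    let φp : ℝ → ℝ := fun x =>
      ((x1 - α) * (x - x3) * (x + (x3 - α - x1))
        - ρ * (x3 - α) * (x - α) * (x - x3)) / (D * (x3 - x2))
    -- (a) nodal conditions
    φm x1 = 0 ∧ φp x2 = 1 ∧ φp x3 = 0 ∧
    -- (b) matching conditions at the interface
    φm α = φp α ∧
    βm * deriv φm α = βp * deriv φp α ∧
    βm * deriv (deriv φm) α = βp * deriv (deriv φp) α :=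
  stmt_6_general βm βp x1 x2 x3 α hβm hβp h23 hmid
end

section
/- Let β⁻, β⁺ > 0 and set ρ = β⁻/β⁺. Let x1 < x2 < x3 with x2 = (x1+x3)/2, let α ∈ (x1,x2), and assume D := (α-x1)(x2-x1) + (α-x1)(x3-α) + ρ(α-x2)(α-x3) ≠ 0. Then the IFE basis function φ3 satisfies: (a) the nodal conditions φ3(x1) = 0, φ3(x2) = 0, φ3(x3) = 1; (b) the matching conditions at the interface: φ3(α⁻) = φ3(α⁺), β⁻ φ3'(α⁻) = β⁺ φ3'(α⁺), and β⁻ φ3''(α⁻) = β⁺ φ3''(α⁺), where one-sided values are taken from the two quadratic branches. -/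
section

variable {𝕜 : Type*} [NontriviallyNormedField 𝕜] {F : Type*} [NormedAddCommGroup F]
  [NormedSpace 𝕜 F] {f g : 𝕜 → F} {c : 𝕜} {b : F}

theorem smul_deriv_eq_of_smul_eq_add_const (h : ∀ x, c • f x = g x + b) (x : 𝕜) :
    c • deriv f x = deriv g x := by
  rw [← deriv_fun_const_smul_field, funext h, deriv_add_const]

theorem smul_deriv_deriv_eq_of_smul_eq_add_const (h : ∀ x, c • f x = g x + b) (x : 𝕜) :
    c • deriv (deriv f) x = deriv (deriv g) x :=
  smul_deriv_eq_of_smul_eq_add_const (b := 0)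
    (fun y ↦ (smul_deriv_eq_of_smul_eq_add_const h y).trans (add_zero _).symm) x

end

theorem stmt_7_general (βm βp x1 x2 x3 α : ℝ) (hβm : 0 < βm) (hβp : 0 < βp)
    (h23 : x2 < x3) :
    let ρ := βm / βp
    let D := (α - x1) * (x2 - x1) + (α - x1) * (x3 - α) + ρ * (α - x2) * (α - x3)
    D ≠ 0 →
    let φm : ℝ → ℝ := fun x =>
      ((α - x1) * (x - α) * (x - x1)
        - ρ * (α - x2) * (x - x1) * (x - (α + x2 - x1))) / (D * ρ * (x3 - x2))
    let φp : ℝ → ℝ := fun x =>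
      ((α - x1) * (x - x2) * (x - (α + x1 - x2))
        - ρ * (α - x2) * (x - α) * (x - x2)) / (D * (x3 - x2))
    -- (a) nodal conditions
    φm x1 = 0 ∧ φp x2 = 0 ∧ φp x3 = 1 ∧
    -- (b) matching conditions at the interface
    φm α = φp α ∧
    βm * deriv φm α = βp * deriv φp α ∧
    βm * deriv (deriv φm) α = βp * deriv (deriv φp) α := by
  intro ρ D hD φm φp
  have hρ : ρ ≠ 0 := div_ne_zero hβm.ne' hβp.ne'
  have hβ : βm = βp * ρ := (mul_div_cancel₀ βm hβp.ne').symm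
  have h32 : x3 - x2 ≠ 0 := sub_ne_zero.2 h23.ne'
  -- `ρ φm - φp` is constant, so the scaled branches share all derivatives.
  have hshift : ∀ x,
      ρ • φm x = φp x + (1 - ρ) * (α - x1) * (x2 - α) * (x2 - x1) / (D * (x3 - x2)) := by
    intro x
    simp only [smul_eq_mul, φm, φp]
    field_simp
    ring
  refine ⟨by simp [φm], by simp [φp], ?_, ?_, ?_, ?_⟩
  · simp only [φp]
    rw [div_eq_one_iff_eq (mul_ne_zero hD h32)]
    simp only [D]
    ring
  · simp only [φm, φp]
    field_simp
    ring
  · rw [hβ, mul_assoc, ← smul_eq_mul ρ, smul_deriv_eq_of_smul_eq_add_const hshift]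
  · rw [hβ, mul_assoc, ← smul_eq_mul ρ, smul_deriv_deriv_eq_of_smul_eq_add_const hshift]

/-- Nodal and interface matching conditions for the quadratic IFE basis function `φ3`
(with left branch `φm` on `(x1,α)` and right branch `φp` on `(α,x3)`). -/
theorem stmt_7 (βm βp x1 x2 x3 α : ℝ) (hβm : 0 < βm) (hβp : 0 < βp)
    (h12 : x1 < x2) (h23 : x2 < x3) (hmid : x2 = (x1 + x3) / 2)
    (hα : α ∈ Set.Ioo x1 x2) :
    let ρ := βm / βp
    let D := (α - x1) * (x2 - x1) + (α - x1) * (x3 - α) + ρ * (α - x2) * (α - x3)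
    D ≠ 0 →
    let φm : ℝ → ℝ := fun x =>
      ((α - x1) * (x - α) * (x - x1)
        - ρ * (α - x2) * (x - x1) * (x - (α + x2 - x1))) / (D * ρ * (x3 - x2))
    let φp : ℝ → ℝ := fun x =>
      ((α - x1) * (x - x2) * (x - (α + x1 - x2))
        - ρ * (α - x2) * (x - α) * (x - x2)) / (D * (x3 - x2))
    -- (a) nodal conditions
    φm x1 = 0 ∧ φp x2 = 0 ∧ φp x3 = 1 ∧
    -- (b) matching conditions at the interface
    φm α = φp α ∧
    βm * deriv φm α = βp * deriv φp α ∧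
    βm * deriv (deriv φm) α = βp * deriv (deriv φp) α :=
  stmt_7_general βm βp x1 x2 x3 α hβm hβp h23
end

section
/- Let 0 < ξ < α < 1, let β⁻, β⁺ > 0, let β(x) = β⁻ on (0,α) and β(x) = β⁺ on (α,1), and let G be the piecewise affine Green's function with source ξ, so that β G' equals the constant A on (0,ξ) and the constant A-1 on (ξ,α) and on (α,1), where A = ((α-ξ)/β⁻ + (1-α)/β⁺)/(α/β⁻ + (1-α)/β⁺). Then for every function e that is continuous on [0,1], continuously differentiable on each of [0,ξ], [ξ,α], [α,1], and satisfies e(0) = e(1) = 0, one has ∫_0^ξ β G' e' dx + ∫_ξ^α β G' e' dx + ∫_α^1 β G' e' dx = e(ξ). -/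
/-! Each integral is a constant value of `β G'` times the increment of `e` over its subinterval
(fundamental theorem of calculus), so the sum telescopes to `A e(ξ) - (A - 1) e(ξ) = e(ξ)`
once `e(0) = e(1) = 0` is used: only the unit drop of `β G'` at the source point matters. -/

open Set intervalIntegral MeasureTheory

theorem integral_eq_sub_of_hasDerivWithinAt_Icc {E : Type*} [NormedAddCommGroup E]
    [NormedSpace ℝ E] [CompleteSpace E] {f f' : ℝ → E} {a b : ℝ} (hab : a ≤ b)
    (hf : ∀ x ∈ Icc a b, HasDerivWithinAt f (f' x) (Icc a b) x)
    (hf' : IntervalIntegrable f' volume a b) :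
    ∫ x in a..b, f' x = f b - f a :=
  integral_eq_sub_of_hasDeriv_right_of_le hab (fun x hx => (hf x hx).continuousWithinAt)
    (fun x hx => ((hf x (Ioo_subset_Icc_self hx)).hasDerivAt
      (Icc_mem_nhds hx.1 hx.2)).hasDerivWithinAt) hf'

theorem integral_const_mul_eq_of_hasDerivWithinAt_Icc {e e' : ℝ → ℝ} {a b : ℝ} (c : ℝ)
    (hab : a ≤ b) (he : ∀ x ∈ Icc a b, HasDerivWithinAt e (e' x) (Icc a b) x)
    (he' : ContinuousOn e' (Icc a b)) :
    ∫ x in a..b, c * e' x = c * (e b - e a) := by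
  rw [intervalIntegral.integral_const_mul,
    integral_eq_sub_of_hasDerivWithinAt_Icc hab he (he'.intervalIntegrable_of_Icc hab)]

theorem stmt_9_general (ξ α βm βp : ℝ) (h0ξ : 0 < ξ) (hξα : ξ < α) (hα1 : α < 1)
    (hβm : 0 < βm) (hβp : 0 < βp)
    (e e1 e2 e3 : ℝ → ℝ)
    (he1 : ∀ x ∈ Icc (0:ℝ) ξ, HasDerivWithinAt e (e1 x) (Icc (0:ℝ) ξ) x)
    (he1c : ContinuousOn e1 (Icc 0 ξ))
    (he2 : ∀ x ∈ Icc ξ α, HasDerivWithinAt e (e2 x) (Icc ξ α) x)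
    (he2c : ContinuousOn e2 (Icc ξ α))
    (he3 : ∀ x ∈ Icc α (1:ℝ), HasDerivWithinAt e (e3 x) (Icc α (1:ℝ)) x)
    (he3c : ContinuousOn e3 (Icc α 1))
    (he0 : e 0 = 0) (heOne : e 1 = 0) :
    let A := ((α - ξ) / βm + (1 - α) / βp) / (α / βm + (1 - α) / βp)
    (∫ x in (0:ℝ)..ξ, βm * (A / βm) * e1 x)
      + (∫ x in ξ..α, βm * ((A - 1) / βm) * e2 x)
      + (∫ x in α..(1:ℝ), βp * ((A - 1) / βp) * e3 x) = e ξ := by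
  intro A
  rw [integral_const_mul_eq_of_hasDerivWithinAt_Icc _ h0ξ.le he1 he1c,
    integral_const_mul_eq_of_hasDerivWithinAt_Icc _ hξα.le he2 he2c,
    integral_const_mul_eq_of_hasDerivWithinAt_Icc _ hα1.le he3 he3c,
    mul_div_cancel₀ _ hβm.ne', mul_div_cancel₀ _ hβm.ne', mul_div_cancel₀ _ hβp.ne', he0, heOne]
  ring

/-- Green's function representation identity: testing `a(G,e) = ∫ β G' e'` with the
piecewise affine Green's function (source `ξ`, `β G' = A` on `(0,ξ)` and `A-1` on
`(ξ,α)` and `(α,1)`) reproduces the point value `e ξ`, for any `e` continuous on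
`[0,1]`, piecewise `C¹`, with `e 0 = e 1 = 0`. -/
theorem stmt_9 (ξ α βm βp : ℝ) (h0ξ : 0 < ξ) (hξα : ξ < α) (hα1 : α < 1)
    (hβm : 0 < βm) (hβp : 0 < βp)
    (e e1 e2 e3 : ℝ → ℝ)
    (hec : ContinuousOn e (Icc 0 1))
    (he1 : ∀ x ∈ Icc (0:ℝ) ξ, HasDerivWithinAt e (e1 x) (Icc (0:ℝ) ξ) x)
    (he1c : ContinuousOn e1 (Icc 0 ξ))
    (he2 : ∀ x ∈ Icc ξ α, HasDerivWithinAt e (e2 x) (Icc ξ α) x)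
    (he2c : ContinuousOn e2 (Icc ξ α))
    (he3 : ∀ x ∈ Icc α (1:ℝ), HasDerivWithinAt e (e3 x) (Icc α (1:ℝ)) x)
    (he3c : ContinuousOn e3 (Icc α 1))
    (he0 : e 0 = 0) (heOne : e 1 = 0) :
    let A := ((α - ξ) / βm + (1 - α) / βp) / (α / βm + (1 - α) / βp)
    (∫ x in (0:ℝ)..ξ, βm * (A / βm) * e1 x)
      + (∫ x in ξ..α, βm * ((A - 1) / βm) * e2 x)
      + (∫ x in α..(1:ℝ), βp * ((A - 1) / βp) * e3 x) = e ξ :=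
  stmt_9_general ξ α βm βp h0ξ hξα hα1 hβm hβp e e1 e2 e3 he1 he1c he2 he2c he3 he3c he0 heOne
end

section
/- Let a = t₀ < t₁ < ... < t_n = b be a partition, let α ∈ (t_k, t_{k+1}) for some k, let β⁻, β⁺ > 0, and let β(x) = β⁻ on (a,α), β(x) = β⁺ on (α,b). Define V_h to be the set of continuous functions v : [a,b] → ℝ with v(a) = v(b) = 0 such that v restricted to each element [t_j, t_{j+1}] with j ≠ k is a polynomial of degree ≤ 2, and v restricted to [t_k, α] and to [α, t_{k+1}] is a polynomial of degree ≤ 2 with β⁻ v'(α⁻) = β⁺ v'(α⁺) and β⁻ v''(α⁻) = β⁺ v''(α⁺). Suppose e : [a,b] → ℝ is continuous with e(a) = e(b) = 0, continuously differentiable on each element [t_j, t_{j+1}] (j ≠ k) and on [t_k, α] and [α, t_{k+1}], and satisfies the Galerkin orthogonality ∫_a^b β e' v' dx = 0 for every v ∈ V_h (the integral split at the nodes and at α). Then e(t_i) = 0 for every i = 0, 1, ..., n. -/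
open Set intervalIntegral

/-- The quadratic immersed finite element space `V_h` on the partition `t 0 < ... < t n`
with interface point `α ∈ (t k, t (k+1))`: continuous functions vanishing at the
endpoints, quadratic polynomials on each non-interface element, and piecewise
quadratic on the interface element with the jump conditions
`β⁻ v'(α⁻) = β⁺ v'(α⁺)` and `β⁻ v''(α⁻) = β⁺ v''(α⁺)`. -/
def IsVhQuad (α βm βp : ℝ) (n k : ℕ) (t : ℕ → ℝ) (v : ℝ → ℝ) : Prop :=
  ContinuousOn v (Icc (t 0) (t n)) ∧ v (t 0) = 0 ∧ v (t n) = 0 ∧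
  (∀ j < n, j ≠ k → ∃ P : Polynomial ℝ, P.degree ≤ 2 ∧
      ∀ x ∈ Icc (t j) (t (j + 1)), v x = P.eval x) ∧
  (∃ P Q : Polynomial ℝ, P.degree ≤ 2 ∧ Q.degree ≤ 2 ∧
      (∀ x ∈ Icc (t k) α, v x = P.eval x) ∧
      (∀ x ∈ Icc α (t (k + 1)), v x = Q.eval x) ∧
      βm * P.derivative.eval α = βp * Q.derivative.eval α ∧
      βm * P.derivative.derivative.eval α = βp * Q.derivative.derivative.eval α)


/-! Let `W` be the coordinate with `W' = 1 / β`. In this variable `-(β u')'`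
becomes `-d²u/dW²`, so the Green's function with source at a node `y = tᵢ` is
`G x = (W (min x y) - W a) * (W b - W (max x y))`. It is affine on every element, and its flux
`β G'` is constant on each side of `y`, hence continuous across `α`: so `G ∈ V_h`. On each piece
`∫ β e' G' = m * (e d - e c)` with `m` the flux there, and the orthogonality relation telescopes to
`(W b - W a) * e (tᵢ) = 0`; as `W` is strictly increasing, `e (tᵢ) = 0`.
-/

open Polynomial

theorem derivWithin_Icc_of_eqOn_affine {v : ℝ → ℝ} {c d s q x : ℝ} (hcd : c < d)
    (hv : ∀ y ∈ Icc c d, v y = s * y + q) (hx : x ∈ Icc c d) :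
    derivWithin v (Icc c d) x = s := by
  rw [derivWithin_congr hv (hv x hx)]
  have : HasDerivAt (fun y => s * y + q) s x := by
    simpa using ((hasDerivAt_id x).const_mul s).add_const q
  exact this.hasDerivWithinAt.derivWithin (uniqueDiffOn_Icc hcd x hx)

theorem integral_mul_derivWithin_of_eqOn_affine {β e v : ℝ → ℝ} {c d K s q : ℝ} (hcd : c < d)
    (hβ : ∀ x ∈ Ioo c d, β x = K) (he : ContDiffOn ℝ 1 e (Icc c d))
    (hv : ∀ x ∈ Icc c d, v x = s * x + q) :
    ∫ x in c..d, β x * derivWithin e (Icc c d) x * derivWithin v (Icc c d) x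
      = K * s * (e d - e c) := by
  rw [← intervalIntegral.integral_derivWithin_Icc_of_contDiffOn_Icc he hcd.le,
    ← intervalIntegral.integral_const_mul]
  refine intervalIntegral.integral_congr_Ioo_of_le hcd.le fun x hx => ?_
  rw [hβ x hx, derivWithin_Icc_of_eqOn_affine hcd hv (Ioo_subset_Icc_self hx)]
  ring

theorem sum_range_ite_lt_mul_sub (f : ℕ → ℝ) (p q : ℝ) {i n : ℕ} (hi : i ≤ n) :
    ∑ j ∈ Finset.range n, (if j < i then p else q) * (f (j + 1) - f j)
      = p * (f i - f 0) + q * (f n - f i) := by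
  induction n, hi using Nat.le_induction with
  | base =>
    rw [Finset.sum_congr rfl fun j hj => by rw [if_pos (Finset.mem_range.mp hj)],
      ← Finset.mul_sum, Finset.sum_range_sub]
    ring
  | succ n hin ih =>
    rw [Finset.sum_range_succ, ih, if_neg (by omega)]
    ring

theorem exists_polynomial_of_eqOn_affine {S : Set ℝ} {v : ℝ → ℝ} {s q : ℝ}
    (hv : ∀ x ∈ S, v x = s * x + q) :
    ∃ P : ℝ[X], P.degree ≤ 2 ∧ (∀ x ∈ S, v x = P.eval x) ∧ P.derivative = C s :=
  ⟨C s * X + C q, degree_linear_le.trans (by norm_num), fun x hx => by simp [hv x hx],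
    by simp⟩

noncomputable def interfaceCoeff (α βm βp x : ℝ) : ℝ := if x < α then βm else βp

noncomputable def harmonicCoord (α βm βp x : ℝ) : ℝ := (min x α - α) / βm + (max x α - α) / βp

def greenFunction (W : ℝ → ℝ) (a b y x : ℝ) : ℝ := (W (min x y) - W a) * (W b - W (max x y))

/-- The flux `β G'` of `greenFunction W a b y` on a piece `[c, d]` not containing `y` in its
interior, where `β W' = 1`. -/
noncomputable def greenFlux (W : ℝ → ℝ) (a b y c : ℝ) : ℝ :=
  if c < y then W b - W y else W a - W y

section Interface

variable {α βm βp c d : ℝ}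

theorem interfaceCoeff_eqOn (h : d ≤ α ∨ α ≤ c) :
    ∀ x ∈ Ico c d, interfaceCoeff α βm βp x = interfaceCoeff α βm βp c := by
  rintro x ⟨hcx, hxd⟩
  rcases h with h | h
  · simp [interfaceCoeff, hxd.trans_le h, (hcx.trans_lt hxd).trans_le h]
  · simp [interfaceCoeff, not_lt.2 h, not_lt.2 (h.trans hcx)]

theorem harmonicCoord_eqOn (h : d ≤ α ∨ α ≤ c) :
    ∀ x ∈ Icc c d, harmonicCoord α βm βp x = (x - α) / interfaceCoeff α βm βp c := by
  rintro x ⟨hcx, hxd⟩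
  rcases h with h | h
  · have hx : x ≤ α := hxd.trans h
    rcases (hcx.trans hx).lt_or_eq with hc | rfl
    · simp [harmonicCoord, interfaceCoeff, hx, hc]
    · simp [harmonicCoord, le_antisymm hx hcx]
  · simp [harmonicCoord, interfaceCoeff, not_lt.2 h, h.trans hcx]

theorem continuous_harmonicCoord : Continuous (harmonicCoord α βm βp) := by
  unfold harmonicCoord
  fun_prop

theorem strictMono_harmonicCoord (hβm : 0 < βm) (hβp : 0 < βp) :
    StrictMono (harmonicCoord α βm βp) := by
  intro x y hxy
  unfold harmonicCoord
  rcases lt_or_ge x α with hx | hx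
  · have : min x α < min y α := by rw [min_eq_left hx.le]; exact lt_min hxy hx
    apply add_lt_add_of_lt_of_le <;> gcongr
  · have : max x α < max y α := by rw [max_eq_left hx]; exact lt_max_of_lt_left hxy
    apply add_lt_add_of_le_of_lt <;> gcongr

end Interface

theorem interfaceCoeff_ne_zero {α βm βp : ℝ} (hβm : βm ≠ 0) (hβp : βp ≠ 0) (x : ℝ) :
    interfaceCoeff α βm βp x ≠ 0 := by
  unfold interfaceCoeff
  split_ifs <;> assumption

section Green

variable {W e : ℝ → ℝ} {a b y c d x₀ K : ℝ}

theorem greenFunction_eqOn_affine (hW : ∀ x ∈ Icc c d, W x = (x - x₀) / K)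
    (hy : d ≤ y ∨ y ≤ c) (hcd : c < d) :
    ∃ q, ∀ x ∈ Icc c d, greenFunction W a b y x = greenFlux W a b y c / K * x + q := by
  rcases hy with hy | hy
  · refine ⟨(-x₀ / K - W a) * (W b - W y), fun x hx => ?_⟩
    simp only [greenFunction, greenFlux, min_eq_left (hx.2.trans hy),
      max_eq_right (hx.2.trans hy), if_pos (hcd.trans_le hy), hW x hx]
    ring
  · refine ⟨(W y - W a) * (W b + x₀ / K), fun x hx => ?_⟩
    simp only [greenFunction, greenFlux, min_eq_right (hy.trans hx.1),
      max_eq_left (hy.trans hx.1), if_neg (not_lt.2 hy), hW x hx]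
    ring

theorem greenFunction_left_eq_zero (h : a ≤ y) : greenFunction W a b y a = 0 := by
  simp [greenFunction, min_eq_left h]

theorem greenFunction_right_eq_zero (h : y ≤ b) : greenFunction W a b y b = 0 := by
  simp [greenFunction, max_eq_left h]

theorem Continuous.greenFunction (hW : Continuous W) : Continuous (greenFunction W a b y) := by
  unfold _root_.greenFunction
  fun_prop

variable {α βm βp : ℝ}

theorem integral_interfaceCoeff_mul_derivWithin_greenFunction
    (hβ : interfaceCoeff α βm βp c ≠ 0) (hα : d ≤ α ∨ α ≤ c) (hy : d ≤ y ∨ y ≤ c)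
    (hcd : c < d) (he : ContDiffOn ℝ 1 e (Icc c d)) :
    ∫ x in c..d, interfaceCoeff α βm βp x * derivWithin e (Icc c d) x
        * derivWithin (greenFunction (harmonicCoord α βm βp) a b y) (Icc c d) x
      = greenFlux (harmonicCoord α βm βp) a b y c * (e d - e c) := by
  obtain ⟨q, hq⟩ := greenFunction_eqOn_affine (harmonicCoord_eqOn hα) hy hcd
  rw [integral_mul_derivWithin_of_eqOn_affine hcd
    (fun x hx => interfaceCoeff_eqOn hα x (Ioo_subset_Ico_self hx)) he hq]
  field_simp

end Green

section Partition

variable {n k i j : ℕ} {t : ℕ → ℝ} {α : ℝ}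

theorem StrictMonoOn.apply_add_one_le_or_le (ht : StrictMonoOn t (Iic n)) (hi : i ≤ n)
    (hj : j < n) : t (j + 1) ≤ t i ∨ t i ≤ t j := by
  rcases lt_or_ge j i with h | h
  · exact .inl (ht.monotoneOn (mem_Iic.2 hj) (mem_Iic.2 hi) h)
  · exact .inr (ht.monotoneOn (mem_Iic.2 hi) (mem_Iic.2 hj.le) h)

theorem StrictMonoOn.apply_add_one_le_or_le_of_mem_Ioo (ht : StrictMonoOn t (Iic n))
    (hk : k < n) (hj : j < n) (hjk : j ≠ k) (hα : α ∈ Ioo (t k) (t (k + 1))) :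
    t (j + 1) ≤ α ∨ α ≤ t j := by
  rcases lt_or_gt_of_ne hjk with h | h
  · exact .inl ((ht.monotoneOn (mem_Iic.2 hj) (mem_Iic.2 hk.le) h).trans hα.1.le)
  · exact .inr (hα.2.le.trans (ht.monotoneOn (mem_Iic.2 hk) (mem_Iic.2 hj.le) h))

theorem StrictMonoOn.sides_of_mem_Ioo (ht : StrictMonoOn t (Iic n)) (hi : i ≤ n) (hk : k < n)
    (hα : α ∈ Ioo (t k) (t (k + 1))) :
    (α ≤ t i ∨ t i ≤ t k) ∧ (t (k + 1) ≤ t i ∨ t i ≤ α) :=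
  have h := ht.apply_add_one_le_or_le hi hk
  ⟨h.imp (hα.2.le.trans ·) id, h.imp id (·.trans hα.1.le)⟩

theorem greenFlux_interface {W : ℝ → ℝ} {a b : ℝ} (ht : StrictMonoOn t (Iic n)) (hi : i ≤ n)
    (hk : k < n) (hα : α ∈ Ioo (t k) (t (k + 1))) :
    greenFlux W a b (t i) α = greenFlux W a b (t i) (t k) := by
  rcases ht.apply_add_one_le_or_le hi hk with h | h
  · simp [greenFlux, hα.2.trans_le h, hα.1.trans (hα.2.trans_le h)]
  · simp [greenFlux, not_lt.2 h, not_lt.2 (h.trans hα.1.le)]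

theorem integral_interfaceElement_greenFunction {βm βp : ℝ} {e : ℝ → ℝ}
    (ht : StrictMonoOn t (Iic n)) (hi : i ≤ n) (hk : k < n) (hα : α ∈ Ioo (t k) (t (k + 1)))
    (hβm : βm ≠ 0) (hβp : βp ≠ 0) (he₁ : ContDiffOn ℝ 1 e (Icc (t k) α))
    (he₂ : ContDiffOn ℝ 1 e (Icc α (t (k + 1)))) :
    (∫ x in t k..α, interfaceCoeff α βm βp x * derivWithin e (Icc (t k) α) x
        * derivWithin (greenFunction (harmonicCoord α βm βp) (t 0) (t n) (t i)) (Icc (t k) α) x)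
      + (∫ x in α..t (k + 1), interfaceCoeff α βm βp x * derivWithin e (Icc α (t (k + 1))) x
        * derivWithin (greenFunction (harmonicCoord α βm βp) (t 0) (t n) (t i))
            (Icc α (t (k + 1))) x)
      = greenFlux (harmonicCoord α βm βp) (t 0) (t n) (t i) (t k) * (e (t (k + 1)) - e (t k)) := by
  obtain ⟨hL, hR⟩ := ht.sides_of_mem_Ioo hi hk hα
  rw [integral_interfaceCoeff_mul_derivWithin_greenFunction (interfaceCoeff_ne_zero hβm hβp _)
      (.inl le_rfl) hL hα.1 he₁,
    integral_interfaceCoeff_mul_derivWithin_greenFunction (interfaceCoeff_ne_zero hβm hβp _)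
      (.inr le_rfl) hR hα.2 he₂, greenFlux_interface ht hi hk hα]
  ring

end Partition

theorem greenFunction_isVhQuad {n k i : ℕ} {t : ℕ → ℝ} {α βm βp : ℝ}
    (ht : StrictMonoOn t (Iic n)) (hk : k < n) (hi : i ≤ n) (hα : α ∈ Ioo (t k) (t (k + 1)))
    (hβm : βm ≠ 0) (hβp : βp ≠ 0) :
    IsVhQuad α βm βp n k t (greenFunction (harmonicCoord α βm βp) (t 0) (t n) (t i)) := by
  obtain ⟨hsideL, hsideR⟩ := ht.sides_of_mem_Ioo hi hk hα
  obtain ⟨qL, hL⟩ := greenFunction_eqOn_affine (a := t 0) (b := t n)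
    (harmonicCoord_eqOn (βm := βm) (βp := βp) (.inl le_rfl)) hsideL hα.1
  obtain ⟨qR, hR⟩ := greenFunction_eqOn_affine (a := t 0) (b := t n)
    (harmonicCoord_eqOn (βm := βm) (βp := βp) (.inr le_rfl)) hsideR hα.2
  obtain ⟨P, hPdeg, hP, hP'⟩ := exists_polynomial_of_eqOn_affine hL
  obtain ⟨Q, hQdeg, hQ, hQ'⟩ := exists_polynomial_of_eqOn_affine hR
  refine ⟨continuous_harmonicCoord.greenFunction.continuousOn,
    greenFunction_left_eq_zero
      (ht.monotoneOn (mem_Iic.2 (Nat.zero_le n)) (mem_Iic.2 hi) i.zero_le),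
    greenFunction_right_eq_zero (ht.monotoneOn (mem_Iic.2 hi) (mem_Iic.2 le_rfl) hi),
    fun j hj hjk => ?_, P, Q, hPdeg, hQdeg, hP, hQ, ?_, ?_⟩
  · obtain ⟨q, hq⟩ := greenFunction_eqOn_affine
      (harmonicCoord_eqOn (ht.apply_add_one_le_or_le_of_mem_Ioo hk hj hjk hα))
      (ht.apply_add_one_le_or_le hi hj) (ht (mem_Iic.2 hj.le) (mem_Iic.2 hj) j.lt_add_one)
    obtain ⟨P, hPdeg, hP, -⟩ := exists_polynomial_of_eqOn_affine hq
    exact ⟨P, hPdeg, hP⟩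
  · simp only [hP', hQ', eval_C, greenFlux_interface ht hi hk hα, interfaceCoeff,
      if_pos hα.1, lt_irrefl, if_false]
    field_simp
  · simp [hP', hQ']

theorem stmt_10_general (n k : ℕ) (t : ℕ → ℝ) (α βm βp : ℝ)
    (hk : k < n) (hmono : ∀ j < n, t j < t (j + 1))
    (hα : α ∈ Ioo (t k) (t (k + 1)))
    (hβm : 0 < βm) (hβp : 0 < βp)
    (β : ℝ → ℝ) (hβ : β = fun x => if x < α then βm else βp)
    (e : ℝ → ℝ)
    (hea : e (t 0) = 0) (heb : e (t n) = 0)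
    (hereg : ∀ j < n, j ≠ k → ContDiffOn ℝ 1 e (Icc (t j) (t (j + 1))))
    (heregk1 : ContDiffOn ℝ 1 e (Icc (t k) α))
    (heregk2 : ContDiffOn ℝ 1 e (Icc α (t (k + 1))))
    (horth : ∀ v : ℝ → ℝ, IsVhQuad α βm βp n k t v →
      (∑ j ∈ Finset.range n,
        if j = k then
          (∫ x in t k..α,
            β x * derivWithin e (Icc (t k) α) x * derivWithin v (Icc (t k) α) x)
          + (∫ x in α..t (k + 1),
            β x * derivWithin e (Icc α (t (k + 1))) x * derivWithin v (Icc α (t (k + 1))) x)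
        else
          ∫ x in t j..t (j + 1),
            β x * derivWithin e (Icc (t j) (t (j + 1))) x
              * derivWithin v (Icc (t j) (t (j + 1))) x) = 0) :
    ∀ i ≤ n, e (t i) = 0 := by
  intro i hi
  have ht : StrictMonoOn t (Iic n) := strictMonoOn_Iic_of_lt_succ hmono
  replace hβ : β = interfaceCoeff α βm βp := hβ
  subst hβ
  set W := harmonicCoord α βm βp
  have hflux : ∀ j < n, greenFlux W (t 0) (t n) (t i) (t j)
      = if j < i then W (t n) - W (t i) else W (t 0) - W (t i) := fun j hj =>
    if_congr (ht.lt_iff_lt (mem_Iic.2 hj.le) (mem_Iic.2 hi)) rfl rfl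
  have h := horth _ (greenFunction_isVhQuad ht hk hi hα hβm.ne' hβp.ne')
  rw [Finset.sum_congr rfl (g := fun j => greenFlux W (t 0) (t n) (t i) (t j)
      * (e (t (j + 1)) - e (t j))) fun j hj => ?_,
    Finset.sum_congr rfl fun j hj => by rw [hflux j (Finset.mem_range.1 hj)],
    sum_range_ite_lt_mul_sub (fun j => e (t j)) _ _ hi, hea, heb] at h
  · have hW : W (t 0) < W (t n) := strictMono_harmonicCoord hβm hβp
      (ht (mem_Iic.2 (Nat.zero_le n)) (mem_Iic.2 le_rfl) (by omega))
    have : (W (t n) - W (t 0)) * e (t i) = 0 := by linarith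
    exact (mul_eq_zero.1 this).resolve_left (sub_pos.2 hW).ne'
  rw [Finset.mem_range] at hj
  split_ifs with hjk
  · subst hjk
    exact integral_interfaceElement_greenFunction ht hi hj hα hβm.ne' hβp.ne' heregk1 heregk2
  · exact integral_interfaceCoeff_mul_derivWithin_greenFunction
      (interfaceCoeff_ne_zero hβm.ne' hβp.ne' _) (ht.apply_add_one_le_or_le_of_mem_Ioo hk hj hjk hα)
      (ht.apply_add_one_le_or_le hi hj) (hmono j hj) (hereg j hj hjk)

/-- Exactness at end nodes: if `e` is continuous, vanishes at the boundary, is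
piecewise `C¹`, and satisfies the Galerkin orthogonality `∫ β e' v' = 0` for all
`v ∈ V_h` (integrals split at the nodes and at `α`), then `e` vanishes at every node. -/
theorem stmt_10 (n k : ℕ) (t : ℕ → ℝ) (α βm βp : ℝ)
    (hk : k < n) (hmono : ∀ j < n, t j < t (j + 1))
    (hα : α ∈ Ioo (t k) (t (k + 1)))
    (hβm : 0 < βm) (hβp : 0 < βp)
    (β : ℝ → ℝ) (hβ : β = fun x => if x < α then βm else βp)
    (e : ℝ → ℝ)
    (hec : ContinuousOn e (Icc (t 0) (t n)))
    (hea : e (t 0) = 0) (heb : e (t n) = 0)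
    (hereg : ∀ j < n, j ≠ k → ContDiffOn ℝ 1 e (Icc (t j) (t (j + 1))))
    (heregk1 : ContDiffOn ℝ 1 e (Icc (t k) α))
    (heregk2 : ContDiffOn ℝ 1 e (Icc α (t (k + 1))))
    (horth : ∀ v : ℝ → ℝ, IsVhQuad α βm βp n k t v →
      (∑ j ∈ Finset.range n,
        if j = k then
          (∫ x in t k..α,
            β x * derivWithin e (Icc (t k) α) x * derivWithin v (Icc (t k) α) x)
          + (∫ x in α..t (k + 1),
            β x * derivWithin e (Icc α (t (k + 1))) x * derivWithin v (Icc α (t (k + 1))) x)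
        else
          ∫ x in t j..t (j + 1),
            β x * derivWithin e (Icc (t j) (t (j + 1))) x
              * derivWithin v (Icc (t j) (t (j + 1))) x) = 0) :
    ∀ i ≤ n, e (t i) = 0 :=
  stmt_10_general n k t α βm βp hk hmono hα hβm hβp β hβ e hea heb hereg heregk1 heregk2 horth
end

section
/- Let t_k < α < t_{k+1}, let β⁻, β⁺ > 0, set 𝒜 = 1/(β⁻(t_{k+1}-α) + β⁺(α-t_k)), and define the bubble function b_h(x) = 𝒜(t_{k+1}-α)(x-t_k) for x ∈ [t_k, α], b_h(x) = 𝒜(α-t_k)(t_{k+1}-x) for x ∈ [α, t_{k+1}], and b_h(x) = 0 otherwise. Let β(x) = β⁻ for x < α and β(x) = β⁺ for x > α. Then: (a) b_h is continuous with b_h(t_k) = b_h(t_{k+1}) = 0; (b) the flux jump satisfies β⁺ b_h'(α⁺) - β⁻ b_h'(α⁻) = -1; (c) ∫_{t_k}^{t_{k+1}} β (b_h')² dx = 𝒜(α-t_k)(t_{k+1}-α) ≤ h/(4·min(β⁻,β⁺)), where h = t_{k+1} - t_k. -/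
open Set intervalIntegral MeasureTheory

/-
The bubble is the hat function on `[t_k, t_{k+1}]` with peak at `α`, whose two slopes
`p = 𝒜 (t_{k+1} - α)` and `-q = -𝒜 (α - t_k)` are chosen so that `p (α - t_k) = q (t_{k+1} - α)`
(continuity) and `β⁻ p + β⁺ q = 𝒜 (β⁻ (t_{k+1} - α) + β⁺ (α - t_k)) = 1` (unit flux jump).
Since `b_h'` is constant on each half, the energy is `β⁻ p² (α - t_k) + β⁺ q² (t_{k+1} - α)`,
which collapses to `𝒜 (α - t_k)(t_{k+1} - α)`. The bound follows from
`β⁻ (t_{k+1} - α) + β⁺ (α - t_k) ≥ min(β⁻, β⁺) h` and `(α - t_k)(t_{k+1} - α) ≤ h² / 4`.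
-/

noncomputable def hatFunction (a c d p q : ℝ) (x : ℝ) : ℝ :=
  if x < a then 0 else if x ≤ c then p * (x - a) else if x ≤ d then q * (d - x) else 0

namespace hatFunction

variable {a c d p q : ℝ}

theorem eq_max_min (hp : 0 ≤ p) (hq : 0 ≤ q) (hpq : p * (c - a) = q * (d - c)) :
    hatFunction a c d p q = fun x => max 0 (min (p * (x - a)) (q * (d - x))) := by
  funext x
  unfold hatFunction
  split_ifs with hxa hxc hxd
  · exact (max_eq_left ((min_le_left _ _).trans (by nlinarith))).symm
  · rw [min_eq_left (by nlinarith), max_eq_right (by nlinarith)]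
  · rw [min_eq_right (by nlinarith), max_eq_right (by nlinarith)]
  · exact (max_eq_left ((min_le_right _ _).trans (by nlinarith))).symm

theorem continuous (hp : 0 ≤ p) (hq : 0 ≤ q) (hpq : p * (c - a) = q * (d - c)) :
    Continuous (hatFunction a c d p q) := by
  rw [eq_max_min hp hq hpq]
  fun_prop

theorem apply_left (hac : a ≤ c) : hatFunction a c d p q a = 0 := by
  simp [hatFunction, hac]

theorem apply_right (hcd : c < d) : hatFunction a c d p q d = 0 := by
  unfold hatFunction
  split_ifs <;> first | rfl | linarith

theorem eqOn_Icc_left : EqOn (hatFunction a c d p q) (fun x => p * (x - a)) (Icc a c) :=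
  fun x hx => by simp [hatFunction, not_lt.2 hx.1, hx.2]

theorem eqOn_Icc_right (hac : a ≤ c) (hpq : p * (c - a) = q * (d - c)) :
    EqOn (hatFunction a c d p q) (fun x => q * (d - x)) (Icc c d) := by
  intro x hx
  obtain rfl | hcx := hx.1.eq_or_lt
  · simpa [hatFunction, not_lt.2 hac] using hpq
  · simp [hatFunction, not_lt.2 (hac.trans hx.1), not_le.2 hcx, hx.2]

theorem hasDerivWithinAt_Icc_left {x : ℝ} (hx : x ∈ Icc a c) :
    HasDerivWithinAt (hatFunction a c d p q) p (Icc a c) x := by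
  have : HasDerivAt (fun y => p * (y - a)) p x := by
    simpa using ((hasDerivAt_id x).sub_const a).const_mul p
  exact this.hasDerivWithinAt.congr_of_mem eqOn_Icc_left hx

theorem hasDerivWithinAt_Icc_right (hac : a ≤ c) (hpq : p * (c - a) = q * (d - c)) {x : ℝ}
    (hx : x ∈ Icc c d) : HasDerivWithinAt (hatFunction a c d p q) (-q) (Icc c d) x := by
  have : HasDerivAt (fun y => q * (d - y)) (-q) x := by
    simpa using ((hasDerivAt_id x).const_sub d).const_mul q
  exact this.hasDerivWithinAt.congr_of_mem (eqOn_Icc_right hac hpq) hx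

theorem derivWithin_Icc_left (hac : a < c) {x : ℝ} (hx : x ∈ Icc a c) :
    derivWithin (hatFunction a c d p q) (Icc a c) x = p :=
  (hasDerivWithinAt_Icc_left hx).derivWithin (uniqueDiffOn_Icc hac x hx)

theorem derivWithin_Icc_right (hac : a ≤ c) (hcd : c < d) (hpq : p * (c - a) = q * (d - c))
    {x : ℝ} (hx : x ∈ Icc c d) :
    derivWithin (hatFunction a c d p q) (Icc c d) x = -q :=
  (hasDerivWithinAt_Icc_right hac hpq hx).derivWithin (uniqueDiffOn_Icc hcd x hx)

theorem derivWithin_Iic_peak (hac : a < c) :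
    derivWithin (hatFunction a c d p q) (Iic c) c = p :=
  ((hasDerivWithinAt_Icc_left ⟨hac.le, le_rfl⟩).mono_of_mem_nhdsWithin
    (Icc_mem_nhdsLE hac)).derivWithin (uniqueDiffWithinAt_Iic c)

theorem derivWithin_Ici_peak (hac : a ≤ c) (hcd : c < d) (hpq : p * (c - a) = q * (d - c)) :
    derivWithin (hatFunction a c d p q) (Ici c) c = -q :=
  ((hasDerivWithinAt_Icc_right hac hpq ⟨le_rfl, hcd.le⟩).mono_of_mem_nhdsWithin
    (Icc_mem_nhdsGE hcd)).derivWithin (uniqueDiffWithinAt_Ici c)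

end hatFunction

theorem intervalIntegral_eq_of_eqOn_Ioo {f : ℝ → ℝ} {a b C : ℝ} (hab : a ≤ b)
    (hf : EqOn f (fun _ => C) (Ioo a b)) : ∫ x in a..b, f x = (b - a) * C := by
  rw [integral_of_le hab, integral_Ioc_eq_integral_Ioo, setIntegral_congr_fun measurableSet_Ioo hf,
    setIntegral_const, Real.volume_real_Ioo_of_le hab, smul_eq_mul]

theorem mul_mul_div_add_mul_le {u v βm βp : ℝ} (hu : 0 < u) (hv : 0 < v) (hβm : 0 < βm)
    (hβp : 0 < βp) : 1 / (βm * v + βp * u) * u * v ≤ (u + v) / (4 * min βm βp) := by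
  have hm : 0 < min βm βp := lt_min hβm hβp
  have hweighted : min βm βp * (u + v) ≤ βm * v + βp * u := by
    nlinarith [min_le_left βm βp, min_le_right βm βp]
  calc 1 / (βm * v + βp * u) * u * v = u * v / (βm * v + βp * u) := by ring
    _ ≤ u * v / (min βm βp * (u + v)) := by gcongr
    _ ≤ (u + v) ^ 2 / 4 / (min βm βp * (u + v)) := by gcongr; nlinarith [sq_nonneg (u - v)]
    _ = (u + v) / (4 * min βm βp) := by field_simp

/-- The bubble function `b_h` on the interface element `[t_k, t_{k+1}]`:
continuity and boundary values, unit flux jump `β⁺ b'(α⁺) - β⁻ b'(α⁻) = -1`,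
and the value and bound of its energy `∫ β (b')²`. -/
theorem stmt_11 (tk t1 α βm βp : ℝ) (h1 : tk < α) (h2 : α < t1)
    (hβm : 0 < βm) (hβp : 0 < βp) :
    let A := 1 / (βm * (t1 - α) + βp * (α - tk))
    let b : ℝ → ℝ := fun x =>
      if x < tk then 0
      else if x ≤ α then A * (t1 - α) * (x - tk)
      else if x ≤ t1 then A * (α - tk) * (t1 - x)
      else 0
    let β : ℝ → ℝ := fun x => if x < α then βm else βp
    -- (a) continuity and boundary values
    Continuous b ∧ b tk = 0 ∧ b t1 = 0 ∧
    -- (b) unit flux jump at α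
    βp * derivWithin b (Ici α) α - βm * derivWithin b (Iic α) α = -1 ∧
    -- (c) energy identity and bound
    ((∫ x in tk..α, β x * (derivWithin b (Icc tk α) x) ^ 2)
      + (∫ x in α..t1, β x * (derivWithin b (Icc α t1) x) ^ 2)
      = A * (α - tk) * (t1 - α)) ∧
    A * (α - tk) * (t1 - α) ≤ (t1 - tk) / (4 * min βm βp) := by
  intro A b β
  have hu : 0 < α - tk := sub_pos.2 h1
  have hv : 0 < t1 - α := sub_pos.2 h2
  have hA : A * (βm * (t1 - α) + βp * (α - tk)) = 1 := one_div_mul_cancel (by positivity)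
  have hb : b = hatFunction tk α t1 (A * (t1 - α)) (A * (α - tk)) := rfl
  have hpq : A * (t1 - α) * (α - tk) = A * (α - tk) * (t1 - α) := by ring
  have hleft : ∫ x in tk..α, β x * (derivWithin b (Icc tk α) x) ^ 2
      = (α - tk) * (βm * (A * (t1 - α)) ^ 2) :=
    intervalIntegral_eq_of_eqOn_Ioo h1.le fun x hx => by
      simp only [β, if_pos hx.2, hb, hatFunction.derivWithin_Icc_left h1 (Ioo_subset_Icc_self hx)]
  have hright : ∫ x in α..t1, β x * (derivWithin b (Icc α t1) x) ^ 2
      = (t1 - α) * (βp * (A * (α - tk)) ^ 2) :=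
    intervalIntegral_eq_of_eqOn_Ioo h2.le fun x hx => by
      simp only [β, if_neg (not_lt.2 hx.1.le), hb, neg_sq,
        hatFunction.derivWithin_Icc_right h1.le h2 hpq (Ioo_subset_Icc_self hx)]
  refine ⟨hatFunction.continuous (by positivity) (by positivity) hpq,
    hatFunction.apply_left h1.le, hatFunction.apply_right h2, ?_, ?_, ?_⟩
  · rw [hb, hatFunction.derivWithin_Ici_peak h1.le h2 hpq, hatFunction.derivWithin_Iic_peak h1]
    linear_combination -hA
  · rw [hleft, hright]
    linear_combination A * (α - tk) * (t1 - α) * hA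
  · simpa only [sub_add_sub_cancel'] using mul_mul_div_add_mul_le hu hv hβm hβp
end

section
/- Let a = t₀ < t₁ < ... < t_n = b, α ∈ (t_k, t_{k+1}), β⁻, β⁺ > 0, β(x) = β⁻ on (a,α) and β(x) = β⁺ on (α,b), and let V_h be the set of continuous functions v : [a,b] → ℝ with v(a) = v(b) = 0 that are polynomials of degree ≤ 2 on each element [t_j, t_{j+1}] with j ≠ k, and polynomials of degree ≤ 2 on [t_k,α] and [α,t_{k+1}] with β⁻ v'(α⁻) = β⁺ v'(α⁺) and β⁻ v''(α⁻) = β⁺ v''(α⁺). Let 𝒜 = 1/(β⁻(t_{k+1}-α) + β⁺(α-t_k)) and let b_h be the bubble function equal to 𝒜(t_{k+1}-α)(x-t_k) on [t_k,α], 𝒜(α-t_k)(t_{k+1}-x) on [α,t_{k+1}], and 0 elsewhere. Suppose e : [a,b] → ℝ is continuous with e(a) = e(b) = 0, continuously differentiable on each element and on [t_k,α], [α,t_{k+1}], and satisfies ∫_a^b β e' v' dx = 0 for all v ∈ V_h. Then e(α) = ∫_{t_k}^{t_{k+1}} β b_h' e' dx, and consequently |e(α)| ≤ (𝒜(α-t_k)(t_{k+1}-α))^{1/2}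 · (∫_a^b β (e')² dx)^{1/2}. -/
/-!
Let `G` be the Green's function of `-(β u')'` on `[t 0, t n]` with source at `α`: it is affine on
each side of `α` with flux jump `βm G'(α⁻) - βp G'(α⁺) = 1`, so the elementwise pairing of `e`
with `G` telescopes to `e α`. The bubble `b` is the Green's function of the interface element alone
and has the same flux jump, so `G - b` is piecewise affine on the mesh with continuous flux at `α`,
i.e. lies in `V_h`. Galerkin orthogonality then gives `e α = ∫ β b' e'`. Since `b'` is constant on
each half of the interface element, Cauchy–Schwarz on the two halves, weighted by `β`, gives the
bound, the first factor being `∫ β b'² = A (α - t k) (t (k + 1) - α)`.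
-/

open Set intervalIntegral

open MeasureTheory Finset

theorem sq_intervalIntegral_le_mul_integral_sq {c d : ℝ} (hcd : c ≤ d) {g : ℝ → ℝ}
    (hg : IntervalIntegrable g volume c d)
    (hg2 : IntervalIntegrable (fun x => g x ^ 2) volume c d) :
    (∫ x in c..d, g x) ^ 2 ≤ (d - c) * ∫ x in c..d, g x ^ 2 := by
  set L := d - c
  set S := ∫ x in c..d, g x
  have hvar : ∫ x in c..d, (L * g x - S) ^ 2 = L ^ 2 * (∫ x in c..d, g x ^ 2) - L * S ^ 2 := by
    have h : ∀ x, (L * g x - S) ^ 2 = L ^ 2 * g x ^ 2 - (2 * L * S) * g x + S ^ 2 :=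
      fun x => by ring
    simp_rw [h]
    rw [intervalIntegral.integral_add ((hg2.const_mul _).sub (hg.const_mul _))
        intervalIntegrable_const, intervalIntegral.integral_sub (hg2.const_mul _) (hg.const_mul _),
      intervalIntegral.integral_const_mul, intervalIntegral.integral_const_mul,
      intervalIntegral.integral_const, smul_eq_mul]
    ring
  have hnonneg : 0 ≤ ∫ x in c..d, (L * g x - S) ^ 2 :=
    intervalIntegral.integral_nonneg hcd fun _ _ => sq_nonneg _
  rcases hcd.eq_or_lt with h | h
  · simp [S, ← h]
  · nlinarith [sub_pos.mpr h]

theorem sq_intervalIntegral_derivWithin_le {c d : ℝ} (hcd : c ≤ d) {f : ℝ → ℝ}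
    (hf : ContDiffOn ℝ 1 f (Icc c d)) :
    (f d - f c) ^ 2 ≤ (d - c) * ∫ x in c..d, derivWithin f (Icc c d) x ^ 2 := by
  rcases hcd.eq_or_lt with h | h
  · simp [h]
  have hcont : ContinuousOn (derivWithin f (Icc c d)) (uIcc c d) := by
    rw [uIcc_of_le hcd]
    exact hf.continuousOn_derivWithin (uniqueDiffOn_Icc h) le_rfl
  rw [← integral_derivWithin_Icc_of_contDiffOn_Icc hf hcd]
  exact sq_intervalIntegral_le_mul_integral_sq hcd hcont.intervalIntegrable
    (hcont.pow 2).intervalIntegrable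

theorem intervalIntegral_eq_of_eqOn_const_mul_derivWithin {c d r : ℝ} (hcd : c ≤ d)
    {f F : ℝ → ℝ} (hf : ContDiffOn ℝ 1 f (Icc c d))
    (hF : EqOn F (fun x => r * derivWithin f (Icc c d) x) (Ioo c d)) :
    ∫ x in c..d, F x = r * (f d - f c) := by
  rw [integral_congr_Ioo_of_le hcd hF, intervalIntegral.integral_const_mul,
    integral_derivWithin_Icc_of_contDiffOn_Icc hf hcd]

theorem sq_mul_add_mul_le_of_sq_le {A βm βp a c X Y S₁ S₂ : ℝ} (hβm : 0 < βm) (hβp : 0 < βp)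
    (ha : 0 < a) (hc : 0 < c) (hA : A * (βm * a + βp * c) = 1) (hX : X ^ 2 ≤ c * S₁)
    (hY : Y ^ 2 ≤ a * S₂) :
    (βm * (A * a) * X + βp * (-(A * c)) * Y) ^ 2 ≤ A * c * a * (βm * S₁ + βp * S₂) := by
  have hA0 : 0 < A := pos_of_mul_pos_left (hA ▸ one_pos) (by positivity)
  -- the difference of the two sides is `βm * βp * a * c * (X + Y) ^ 2`
  have hcs : (βm * a * X - βp * c * Y) ^ 2
      ≤ (βm * a + βp * c) * (βm * a * X ^ 2 + βp * c * Y ^ 2) := by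
    nlinarith [mul_nonneg (mul_pos (mul_pos hβm ha) (mul_pos hβp hc)).le (sq_nonneg (X + Y))]
  calc (βm * (A * a) * X + βp * (-(A * c)) * Y) ^ 2
        = A ^ 2 * (βm * a * X - βp * c * Y) ^ 2 := by ring
    _ ≤ A ^ 2 * ((βm * a + βp * c) * (βm * a * X ^ 2 + βp * c * Y ^ 2)) := by gcongr
    _ = A * (βm * a * X ^ 2 + βp * c * Y ^ 2) := by
        linear_combination (A * (βm * a * X ^ 2 + βp * c * Y ^ 2)) * hA
    _ ≤ A * (βm * a * (c * S₁) + βp * c * (a * S₂)) := by gcongr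
    _ = A * c * a * (βm * S₁ + βp * S₂) := by ring

def AffineOn (σ : ℝ) (s : Set ℝ) (w : ℝ → ℝ) : Prop :=
  ∃ q, ∀ y ∈ s, w y = σ * y + q

namespace AffineOn

variable {σ τ : ℝ} {s s' : Set ℝ} {w w' : ℝ → ℝ}

theorem mono (h : AffineOn σ s w) (hs : s' ⊆ s) : AffineOn σ s' w :=
  let ⟨q, hq⟩ := h; ⟨q, fun y hy => hq y (hs hy)⟩

theorem sub (h : AffineOn σ s w) (h' : AffineOn τ s w') :
    AffineOn (σ - τ) s (fun x => w x - w' x) :=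
  let ⟨q, hq⟩ := h; let ⟨q', hq'⟩ := h'
  ⟨q - q', fun y hy => by simp only [hq y hy, hq' y hy]; ring⟩

theorem continuousOn (h : AffineOn σ s w) : ContinuousOn w s := by
  obtain ⟨q, hq⟩ := h
  exact (continuous_const.mul continuous_id |>.add continuous_const).continuousOn.congr hq

theorem derivWithin_Icc_eq {c d x : ℝ} (h : AffineOn σ (Icc c d) w) (hx : x ∈ Ioo c d) :
    derivWithin w (Icc c d) x = σ := by
  obtain ⟨q, hq⟩ := h
  have hline : HasDerivAt (fun y => σ * y + q) σ x := by
    simpa using ((hasDerivAt_id x).const_mul σ).add_const q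
  rw [derivWithin_congr hq (hq x (Ioo_subset_Icc_self hx)),
    derivWithin_of_mem_nhds (Icc_mem_nhds hx.1 hx.2), hline.deriv]

theorem exists_polynomial (h : AffineOn σ s w) :
    ∃ P : Polynomial ℝ, P.degree ≤ 2 ∧ P.derivative = Polynomial.C σ ∧
      ∀ y ∈ s, w y = P.eval y := by
  obtain ⟨q, hq⟩ := h
  refine ⟨Polynomial.C σ * Polynomial.X + Polynomial.C q,
    Polynomial.degree_linear_le.trans (by norm_num), by simp, fun y hy => by simp [hq y hy]⟩

end AffineOn

theorem intervalIntegral_mul_derivWithin_of_affineOn {c d β₀ σ : ℝ} (hcd : c ≤ d)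
    {β e w : ℝ → ℝ} (hβ : ∀ x ∈ Ioo c d, β x = β₀) (he : ContDiffOn ℝ 1 e (Icc c d))
    (hw : AffineOn σ (Icc c d) w) :
    ∫ x in c..d, β x * derivWithin e (Icc c d) x * derivWithin w (Icc c d) x =
      β₀ * σ * (e d - e c) :=
  intervalIntegral_eq_of_eqOn_const_mul_derivWithin hcd he fun x hx => by
    simp only [hβ x hx, hw.derivWithin_Icc_eq hx]; ring

theorem Finset.sum_range_eq_of_telescoping {R : Type*} [Ring R] {n k : ℕ} (hk : k < n)
    {f u : ℕ → R} {c₁ c₂ : R}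
    (hleft : ∀ j < k, f j = c₁ * (u (j + 1) - u j))
    (hright : ∀ j, k < j → j < n → f j = c₂ * (u (j + 1) - u j)) :
    ∑ j ∈ range n, f j = c₁ * (u k - u 0) + f k + c₂ * (u n - u (k + 1)) := by
  have hL : ∑ j ∈ range k, f j = c₁ * (u k - u 0) := by
    rw [← sum_range_sub, mul_sum]
    exact sum_congr rfl fun j hj => hleft j (mem_range.mp hj)
  have hR : ∑ j ∈ Ico (k + 1) n, f j = c₂ * (u n - u (k + 1)) := by
    rw [← sum_Ico_sub _ hk, mul_sum]
    exact sum_congr rfl fun j hj => hright j (mem_Ico.mp hj).1 (mem_Ico.mp hj).2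
  rw [← sum_range_add_sum_Ico _ hk.le, sum_eq_sum_Ico_succ_bot hk, hL, hR, add_assoc]

theorem flux_denominator_pos {βm βp p α r : ℝ} (hβm : 0 < βm) (hβp : 0 < βp)
    (hα : α ∈ Ioo p r) : 0 < βm * (r - α) + βp * (α - p) := by
  have := sub_pos.mpr hα.1; have := sub_pos.mpr hα.2; positivity

/-- With `A = 1 / (βm * (r - α) + βp * (α - p))` this is the Green's function of `-(β u')'` on
`[p, r]` with source at `α`. -/
noncomputable def bubble (A p α r x : ℝ) : ℝ :=
  if x < p then 0
  else if x ≤ α then A * (r - α) * (x - p)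
  else if x ≤ r then A * (α - p) * (r - x)
  else 0

namespace bubble

variable {A p α r x : ℝ}

theorem eq_zero_of_le (hpα : p ≤ α) (hx : x ≤ p) : bubble A p α r x = 0 := by
  rcases hx.lt_or_eq with hx | rfl
  · simp [bubble, hx]
  · simp [bubble, hpα]

theorem eq_zero_of_ge (hpα : p ≤ α) (hαr : α ≤ r) (hx : r ≤ x) : bubble A p α r x = 0 := by
  have hpx : ¬x < p := by linarith
  by_cases hxα : x ≤ α
  · simp [bubble, hpx, hxα, show r = α by linarith]
  · rcases hx.eq_or_lt with rfl | hrx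
    · simp [bubble, hpx, hxα]
    · simp [bubble, hpx, hxα, hrx.not_ge]

theorem affineOn_left : AffineOn (A * (r - α)) (Icc p α) (bubble A p α r) :=
  ⟨-(A * (r - α) * p), fun x hx => by simp [bubble, hx.1.not_gt, hx.2]; ring⟩

theorem affineOn_right (hpα : p ≤ α) : AffineOn (-(A * (α - p))) (Icc α r) (bubble A p α r) := by
  refine ⟨A * (α - p) * r, fun x hx => ?_⟩
  have hpx : ¬x < p := by linarith [hx.1]
  rcases hx.1.eq_or_lt with rfl | hαx
  · simp [bubble, hpx]; ring
  · simp [bubble, hpx, hαx.not_ge, hx.2]; ring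


theorem affineOn_Iic (hpα : p ≤ α) : AffineOn 0 (Iic p) (bubble A p α r) :=
  ⟨0, fun _ hx => by simp [eq_zero_of_le hpα hx]⟩

theorem affineOn_Ici (hpα : p ≤ α) (hαr : α ≤ r) : AffineOn 0 (Ici r) (bubble A p α r) :=
  ⟨0, fun _ hx => by simp [eq_zero_of_ge hpα hαr hx]⟩

theorem pairing_eq {β e : ℝ → ℝ} {βm βp : ℝ} (hα : α ∈ Ioo p r) (hβm : ∀ x < α, β x = βm)
    (hβp : ∀ x > α, β x = βp) (he₁ : ContDiffOn ℝ 1 e (Icc p α))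
    (he₂ : ContDiffOn ℝ 1 e (Icc α r)) :
    (∫ x in p..α, β x * derivWithin (bubble A p α r) (Icc p α) x * derivWithin e (Icc p α) x)
      + (∫ x in α..r, β x * derivWithin (bubble A p α r) (Icc α r) x * derivWithin e (Icc α r) x)
      = βm * (A * (r - α)) * (e α - e p) + βp * (-(A * (α - p))) * (e r - e α) := by
  rw [intervalIntegral_eq_of_eqOn_const_mul_derivWithin hα.1.le he₁ fun x hx => by
      rw [hβm x hx.2, affineOn_left.derivWithin_Icc_eq hx],
    intervalIntegral_eq_of_eqOn_const_mul_derivWithin hα.2.le he₂ fun x hx => by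
      rw [hβp x hx.1, (affineOn_right hα.1.le).derivWithin_Icc_eq hx]]

theorem sq_pairing_le {β e : ℝ → ℝ} {βm βp : ℝ} (hα : α ∈ Ioo p r) (hβm0 : 0 < βm)
    (hβp0 : 0 < βp) (hβm : ∀ x < α, β x = βm) (hβp : ∀ x > α, β x = βp)
    (hA : A * (βm * (r - α) + βp * (α - p)) = 1) (he₁ : ContDiffOn ℝ 1 e (Icc p α))
    (he₂ : ContDiffOn ℝ 1 e (Icc α r)) :
    ((∫ x in p..α, β x * derivWithin (bubble A p α r) (Icc p α) x * derivWithin e (Icc p α) x)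
      + (∫ x in α..r, β x * derivWithin (bubble A p α r) (Icc α r) x * derivWithin e (Icc α r) x))
        ^ 2
      ≤ A * (α - p) * (r - α) * ((∫ x in p..α, β x * derivWithin e (Icc p α) x ^ 2)
        + ∫ x in α..r, β x * derivWithin e (Icc α r) x ^ 2) := by
  rw [pairing_eq hα hβm hβp he₁ he₂,
    integral_congr_Ioo_of_le hα.1.le (g := fun x => βm * derivWithin e (Icc p α) x ^ 2)
      fun x hx => by simp only [hβm x hx.2],
    integral_congr_Ioo_of_le hα.2.le (g := fun x => βp * derivWithin e (Icc α r) x ^ 2)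
      fun x hx => by simp only [hβp x hx.1],
    intervalIntegral.integral_const_mul, intervalIntegral.integral_const_mul]
  exact sq_mul_add_mul_le_of_sq_le hβm0 hβp0 (sub_pos.mpr hα.2) (sub_pos.mpr hα.1) hA
    (sq_intervalIntegral_derivWithin_le hα.1.le he₁)
    (sq_intervalIntegral_derivWithin_le hα.2.le he₂)

end bubble

/-- The energy pairing `∫ β e' w'` over the mesh, with one-sided derivatives on each element and
the interface element `[t k, t (k + 1)]` split at `α`. -/
noncomputable def brokenForm (β : ℝ → ℝ) (n k : ℕ) (t : ℕ → ℝ) (α : ℝ) (e w : ℝ → ℝ) : ℝ :=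
  ∑ j ∈ range n,
    if j = k then
      (∫ x in t k..α, β x * derivWithin e (Icc (t k) α) x * derivWithin w (Icc (t k) α) x)
      + (∫ x in α..t (k + 1),
          β x * derivWithin e (Icc α (t (k + 1))) x * derivWithin w (Icc α (t (k + 1))) x)
    else
      ∫ x in t j..t (j + 1),
        β x * derivWithin e (Icc (t j) (t (j + 1))) x * derivWithin w (Icc (t j) (t (j + 1))) x

section Mesh

variable {n k : ℕ} {t : ℕ → ℝ} {α : ℝ}

theorem mesh_le (hmono : ∀ j < n, t j < t (j + 1)) {i j : ℕ} (hij : i ≤ j) (hj : j ≤ n) :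
    t i ≤ t j :=
  (strictMonoOn_Iic_of_lt_succ hmono).monotoneOn (hij.trans hj) hj hij

theorem brokenForm_eq_of_affineOn {β e w : ℝ → ℝ} {βm βp σ₁ σ₂ σ₃ σ₄ : ℝ} (hk : k < n)
    (hmono : ∀ j < n, t j < t (j + 1)) (hα : α ∈ Ioo (t k) (t (k + 1)))
    (hβm : ∀ x < α, β x = βm) (hβp : ∀ x > α, β x = βp)
    (he : ∀ j < n, j ≠ k → ContDiffOn ℝ 1 e (Icc (t j) (t (j + 1))))
    (hek₁ : ContDiffOn ℝ 1 e (Icc (t k) α)) (hek₂ : ContDiffOn ℝ 1 e (Icc α (t (k + 1))))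
    (hw₁ : AffineOn σ₁ (Icc (t 0) (t k)) w) (hw₂ : AffineOn σ₂ (Icc (t k) α) w)
    (hw₃ : AffineOn σ₃ (Icc α (t (k + 1))) w) (hw₄ : AffineOn σ₄ (Icc (t (k + 1)) (t n)) w) :
    brokenForm β n k t α e w = βm * σ₁ * (e (t k) - e (t 0)) + βm * σ₂ * (e α - e (t k))
      + βp * σ₃ * (e (t (k + 1)) - e α) + βp * σ₄ * (e (t n) - e (t (k + 1))) := by
  rw [brokenForm,
    sum_range_eq_of_telescoping (u := fun j => e (t j)) (c₁ := βm * σ₁) (c₂ := βp * σ₄) hk,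
    if_pos rfl,
    intervalIntegral_mul_derivWithin_of_affineOn hα.1.le (fun x hx => hβm x hx.2) hek₁ hw₂,
    intervalIntegral_mul_derivWithin_of_affineOn hα.2.le (fun x hx => hβp x hx.1) hek₂ hw₃]
  · ring
  · intro j hj
    have hjk : t (j + 1) ≤ t k := mesh_le hmono hj hk.le
    rw [if_neg hj.ne]
    exact intervalIntegral_mul_derivWithin_of_affineOn (hmono j (by omega)).le
      (fun x hx => hβm x (by linarith [hx.2, hα.1])) (he j (by omega) hj.ne)
      (hw₁.mono (Icc_subset_Icc (mesh_le hmono (Nat.zero_le j) (by omega)) hjk))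
  · intro j hj hjn
    have hkj : t (k + 1) ≤ t j := mesh_le hmono hj hjn.le
    rw [if_neg hj.ne']
    exact intervalIntegral_mul_derivWithin_of_affineOn (hmono j hjn).le
      (fun x hx => hβp x (by linarith [hx.1, hα.2])) (he j hjn hj.ne')
      (hw₄.mono (Icc_subset_Icc hkj (mesh_le hmono hjn le_rfl)))

theorem isVhQuad_of_affineOn {w : ℝ → ℝ} {βm βp σ₁ σ₂ σ₃ σ₄ : ℝ} (hk : k < n)
    (hmono : ∀ j < n, t j < t (j + 1)) (hα : α ∈ Icc (t k) (t (k + 1)))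
    (hw₁ : AffineOn σ₁ (Icc (t 0) (t k)) w) (hw₂ : AffineOn σ₂ (Icc (t k) α) w)
    (hw₃ : AffineOn σ₃ (Icc α (t (k + 1))) w) (hw₄ : AffineOn σ₄ (Icc (t (k + 1)) (t n)) w)
    (hflux : βm * σ₂ = βp * σ₃) (hw0 : w (t 0) = 0) (hwn : w (t n) = 0) :
    IsVhQuad α βm βp n k t w := by
  refine ⟨?_, hw0, hwn, fun j hj hjk => ?_, ?_⟩
  · have h := ((hw₁.continuousOn.union_of_isClosed hw₂.continuousOn isClosed_Icc isClosed_Icc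
      ).union_of_isClosed hw₃.continuousOn (isClosed_Icc.union isClosed_Icc) isClosed_Icc
      ).union_of_isClosed hw₄.continuousOn
      ((isClosed_Icc.union isClosed_Icc).union isClosed_Icc) isClosed_Icc
    rwa [Icc_union_Icc_eq_Icc (mesh_le hmono (Nat.zero_le k) hk.le) hα.1,
      Icc_union_Icc_eq_Icc ((mesh_le hmono (Nat.zero_le k) hk.le).trans hα.1) hα.2,
      Icc_union_Icc_eq_Icc ((mesh_le hmono (Nat.zero_le k) hk.le).trans (hα.1.trans hα.2))
        (mesh_le hmono hk le_rfl)] at h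
  · rcases hjk.lt_or_gt with hj' | hj'
    · obtain ⟨P, hP, -, hPw⟩ := (hw₁.mono (Icc_subset_Icc (mesh_le hmono (Nat.zero_le j) hj.le)
        (mesh_le hmono hj' hk.le))).exists_polynomial
      exact ⟨P, hP, hPw⟩
    · obtain ⟨P, hP, -, hPw⟩ := (hw₄.mono (Icc_subset_Icc (mesh_le hmono hj' hj.le)
        (mesh_le hmono hj le_rfl))).exists_polynomial
      exact ⟨P, hP, hPw⟩
  · obtain ⟨P, hP, hP', hPw⟩ := hw₂.exists_polynomial
    obtain ⟨Q, hQ, hQ', hQw⟩ := hw₃.exists_polynomial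
    exact ⟨P, Q, hP, hQ, hPw, hQw, by simp [hP', hQ', hflux], by simp [hP', hQ']⟩

end Mesh

section GreenMinusBubble

variable {n k : ℕ} {t : ℕ → ℝ} {α A A₀ : ℝ}

theorem affineOn_bubble_sub_bubble (hk : k < n) (hmono : ∀ j < n, t j < t (j + 1))
    (hα : α ∈ Icc (t k) (t (k + 1))) :
    AffineOn (A₀ * (t n - α)) (Icc (t 0) (t k))
        (fun x => bubble A₀ (t 0) α (t n) x - bubble A (t k) α (t (k + 1)) x) ∧
      AffineOn (A₀ * (t n - α) - A * (t (k + 1) - α)) (Icc (t k) α)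
        (fun x => bubble A₀ (t 0) α (t n) x - bubble A (t k) α (t (k + 1)) x) ∧
      AffineOn (A * (α - t k) - A₀ * (α - t 0)) (Icc α (t (k + 1)))
        (fun x => bubble A₀ (t 0) α (t n) x - bubble A (t k) α (t (k + 1)) x) ∧
      AffineOn (-(A₀ * (α - t 0))) (Icc (t (k + 1)) (t n))
        (fun x => bubble A₀ (t 0) α (t n) x - bubble A (t k) α (t (k + 1)) x) := by
  have h0k : t 0 ≤ t k := mesh_le hmono (Nat.zero_le k) hk.le
  have hkn : t (k + 1) ≤ t n := mesh_le hmono hk le_rfl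
  have hG₁ : AffineOn (A₀ * (t n - α)) (Icc (t 0) α) (bubble A₀ (t 0) α (t n)) :=
    bubble.affineOn_left
  have hG₂ : AffineOn (-(A₀ * (α - t 0))) (Icc α (t n)) (bubble A₀ (t 0) α (t n)) :=
    bubble.affineOn_right (h0k.trans hα.1)
  refine ⟨?_, ?_, ?_, ?_⟩
  · simpa using (hG₁.mono (Icc_subset_Icc le_rfl hα.1)).sub
      ((bubble.affineOn_Iic hα.1).mono Icc_subset_Iic_self)
  · exact (hG₁.mono (Icc_subset_Icc h0k le_rfl)).sub bubble.affineOn_left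
  · convert (hG₂.mono (Icc_subset_Icc le_rfl hkn)).sub (bubble.affineOn_right hα.1) using 1
    ring
  · simpa using (hG₂.mono (Icc_subset_Icc (hα.2) le_rfl)).sub
      ((bubble.affineOn_Ici hα.1 hα.2).mono Icc_subset_Ici_self)

theorem isVhQuad_bubble_sub_bubble {βm βp : ℝ} (hk : k < n) (hmono : ∀ j < n, t j < t (j + 1))
    (hα : α ∈ Icc (t k) (t (k + 1))) (hA₀ : A₀ * (βm * (t n - α) + βp * (α - t 0)) = 1)
    (hA : A * (βm * (t (k + 1) - α) + βp * (α - t k)) = 1) :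
    IsVhQuad α βm βp n k t
      (fun x => bubble A₀ (t 0) α (t n) x - bubble A (t k) α (t (k + 1)) x) := by
  have h0k : t 0 ≤ t k := mesh_le hmono (Nat.zero_le k) hk.le
  have hkn : t (k + 1) ≤ t n := mesh_le hmono hk le_rfl
  obtain ⟨hv₁, hv₂, hv₃, hv₄⟩ := affineOn_bubble_sub_bubble (A := A) (A₀ := A₀) hk hmono hα
  refine isVhQuad_of_affineOn hk hmono hα hv₁ hv₂ hv₃ hv₄ (by linear_combination hA₀ - hA) ?_ ?_
  · rw [bubble.eq_zero_of_le (h0k.trans hα.1) le_rfl, bubble.eq_zero_of_le hα.1 h0k, sub_zero]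
  · rw [bubble.eq_zero_of_ge (h0k.trans hα.1) (hα.2.trans hkn) le_rfl,
      bubble.eq_zero_of_ge hα.1 hα.2 hkn, sub_zero]

theorem brokenForm_bubble_sub_bubble {β e : ℝ → ℝ} {βm βp : ℝ} (hk : k < n)
    (hmono : ∀ j < n, t j < t (j + 1)) (hα : α ∈ Ioo (t k) (t (k + 1)))
    (hβm : ∀ x < α, β x = βm) (hβp : ∀ x > α, β x = βp)
    (hA₀ : A₀ * (βm * (t n - α) + βp * (α - t 0)) = 1)
    (he : ∀ j < n, j ≠ k → ContDiffOn ℝ 1 e (Icc (t j) (t (j + 1))))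
    (hek₁ : ContDiffOn ℝ 1 e (Icc (t k) α)) (hek₂ : ContDiffOn ℝ 1 e (Icc α (t (k + 1))))
    (he0 : e (t 0) = 0) (hen : e (t n) = 0) :
    brokenForm β n k t α e
        (fun x => bubble A₀ (t 0) α (t n) x - bubble A (t k) α (t (k + 1)) x)
      = e α - ((∫ x in t k..α, β x * derivWithin (bubble A (t k) α (t (k + 1))) (Icc (t k) α) x
            * derivWithin e (Icc (t k) α) x)
          + (∫ x in α..t (k + 1), β x
            * derivWithin (bubble A (t k) α (t (k + 1))) (Icc α (t (k + 1))) x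
            * derivWithin e (Icc α (t (k + 1))) x)) := by
  obtain ⟨hv₁, hv₂, hv₃, hv₄⟩ :=
    affineOn_bubble_sub_bubble (A := A) (A₀ := A₀) hk hmono (Ioo_subset_Icc_self hα)
  rw [brokenForm_eq_of_affineOn hk hmono hα hβm hβp he hek₁ hek₂ hv₁ hv₂ hv₃ hv₄,
    bubble.pairing_eq hα hβm hβp hek₁ hek₂, he0, hen]
  linear_combination e α * hA₀

end GreenMinusBubble

theorem stmt_12_general (n k : ℕ) (t : ℕ → ℝ) (α βm βp : ℝ)
    (hk : k < n) (hmono : ∀ j < n, t j < t (j + 1))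
    (hα : α ∈ Ioo (t k) (t (k + 1)))
    (hβm : 0 < βm) (hβp : 0 < βp)
    (β : ℝ → ℝ) (hβ : β = fun x => if x < α then βm else βp)
    (A : ℝ) (hA : A = 1 / (βm * (t (k + 1) - α) + βp * (α - t k)))
    (b : ℝ → ℝ)
    (hb : b = fun x =>
      if x < t k then 0
      else if x ≤ α then A * (t (k + 1) - α) * (x - t k)
      else if x ≤ t (k + 1) then A * (α - t k) * (t (k + 1) - x)
      else 0)
    (e : ℝ → ℝ)
    (hea : e (t 0) = 0) (heb : e (t n) = 0)
    (hereg : ∀ j < n, j ≠ k → ContDiffOn ℝ 1 e (Icc (t j) (t (j + 1))))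
    (heregk1 : ContDiffOn ℝ 1 e (Icc (t k) α))
    (heregk2 : ContDiffOn ℝ 1 e (Icc α (t (k + 1))))
    (horth : ∀ v : ℝ → ℝ, IsVhQuad α βm βp n k t v →
      (∑ j ∈ Finset.range n,
        if j = k then
          (∫ x in t k..α,
            β x * derivWithin e (Icc (t k) α) x * derivWithin v (Icc (t k) α) x)
          + (∫ x in α..t (k + 1),
            β x * derivWithin e (Icc α (t (k + 1))) x * derivWithin v (Icc α (t (k + 1))) x)
        else
          ∫ x in t j..t (j + 1),
            β x * derivWithin e (Icc (t j) (t (j + 1))) x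
              * derivWithin v (Icc (t j) (t (j + 1))) x) = 0) :
    e α = (∫ x in t k..α,
            β x * derivWithin b (Icc (t k) α) x * derivWithin e (Icc (t k) α) x)
          + (∫ x in α..t (k + 1),
            β x * derivWithin b (Icc α (t (k + 1))) x * derivWithin e (Icc α (t (k + 1))) x)
    ∧ |e α| ≤ Real.sqrt (A * (α - t k) * (t (k + 1) - α)) *
        Real.sqrt (∑ j ∈ Finset.range n,
          if j = k then
            (∫ x in t k..α, β x * (derivWithin e (Icc (t k) α) x) ^ 2)
            + (∫ x in α..t (k + 1), β x * (derivWithin e (Icc α (t (k + 1))) x) ^ 2)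
          else
            ∫ x in t j..t (j + 1), β x * (derivWithin e (Icc (t j) (t (j + 1))) x) ^ 2) := by
  replace hb : b = bubble A (t k) α (t (k + 1)) := hb
  subst hb
  have hβm' : ∀ x < α, β x = βm := fun x hx => by simp [hβ, hx]
  have hβp' : ∀ x > α, β x = βp := fun x hx => by simp [hβ, hx.not_gt]
  have hA' : A * (βm * (t (k + 1) - α) + βp * (α - t k)) = 1 := by
    rw [hA, one_div_mul_cancel (flux_denominator_pos hβm hβp hα).ne']
  have hα' : α ∈ Ioo (t 0) (t n) :=
    ⟨(mesh_le hmono (Nat.zero_le k) hk.le).trans_lt hα.1, hα.2.trans_le (mesh_le hmono hk le_rfl)⟩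
  have hA₀ := one_div_mul_cancel (flux_denominator_pos hβm hβp hα').ne'
  have hid := horth _ (isVhQuad_bubble_sub_bubble hk hmono (Ioo_subset_Icc_self hα) hA₀ hA')
  rw [← brokenForm, brokenForm_bubble_sub_bubble hk hmono hα hβm' hβp' hA₀ hereg heregk1 heregk2
    hea heb, sub_eq_zero] at hid
  refine ⟨hid, ?_⟩
  have hpos : 0 ≤ A * (α - t k) * (t (k + 1) - α) := by
    have := sub_pos.mpr hα.1; have := sub_pos.mpr hα.2
    have : 0 < A := hA ▸ one_div_pos.mpr (flux_denominator_pos hβm hβp hα)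
    positivity
  rw [hid, ← add_sum_erase _ _ (mem_range.2 hk), if_pos rfl]
  refine (Real.abs_le_sqrt ((bubble.sq_pairing_le hα hβm hβp hβm' hβp' hA' heregk1 heregk2).trans
    (mul_le_mul_of_nonneg_left (le_add_of_nonneg_right (sum_nonneg fun j hj => ?_)) hpos))).trans_eq
    (Real.sqrt_mul hpos _)
  rw [if_neg (ne_of_mem_erase hj)]
  exact intervalIntegral.integral_nonneg (hmono j (mem_range.1 (mem_of_mem_erase hj))).le
    fun x _ => mul_nonneg (by simp only [hβ]; split_ifs <;> positivity) (sq_nonneg _)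

/-- Interface-point error identity: for `e` satisfying Galerkin orthogonality
against `V_h`, the point error at `α` equals the pairing with the bubble function,
`e(α) = ∫ β b_h' e'`, and hence is bounded via Cauchy–Schwarz. -/
theorem stmt_12 (n k : ℕ) (t : ℕ → ℝ) (α βm βp : ℝ)
    (hk : k < n) (hmono : ∀ j < n, t j < t (j + 1))
    (hα : α ∈ Ioo (t k) (t (k + 1)))
    (hβm : 0 < βm) (hβp : 0 < βp)
    (β : ℝ → ℝ) (hβ : β = fun x => if x < α then βm else βp)
    (A : ℝ) (hA : A = 1 / (βm * (t (k + 1) - α) + βp * (α - t k)))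
    (b : ℝ → ℝ)
    (hb : b = fun x =>
      if x < t k then 0
      else if x ≤ α then A * (t (k + 1) - α) * (x - t k)
      else if x ≤ t (k + 1) then A * (α - t k) * (t (k + 1) - x)
      else 0)
    (e : ℝ → ℝ)
    (hec : ContinuousOn e (Icc (t 0) (t n)))
    (hea : e (t 0) = 0) (heb : e (t n) = 0)
    (hereg : ∀ j < n, j ≠ k → ContDiffOn ℝ 1 e (Icc (t j) (t (j + 1))))
    (heregk1 : ContDiffOn ℝ 1 e (Icc (t k) α))
    (heregk2 : ContDiffOn ℝ 1 e (Icc α (t (k + 1))))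
    (horth : ∀ v : ℝ → ℝ, IsVhQuad α βm βp n k t v →
      (∑ j ∈ Finset.range n,
        if j = k then
          (∫ x in t k..α,
            β x * derivWithin e (Icc (t k) α) x * derivWithin v (Icc (t k) α) x)
          + (∫ x in α..t (k + 1),
            β x * derivWithin e (Icc α (t (k + 1))) x * derivWithin v (Icc α (t (k + 1))) x)
        else
          ∫ x in t j..t (j + 1),
            β x * derivWithin e (Icc (t j) (t (j + 1))) x
              * derivWithin v (Icc (t j) (t (j + 1))) x) = 0) :
    e α = (∫ x in t k..α,
            β x * derivWithin b (Icc (t k) α) x * derivWithin e (Icc (t k) α) x)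
          + (∫ x in α..t (k + 1),
            β x * derivWithin b (Icc α (t (k + 1))) x * derivWithin e (Icc α (t (k + 1))) x)
    ∧ |e α| ≤ Real.sqrt (A * (α - t k) * (t (k + 1) - α)) *
        Real.sqrt (∑ j ∈ Finset.range n,
          if j = k then
            (∫ x in t k..α, β x * (derivWithin e (Icc (t k) α) x) ^ 2)
            + (∫ x in α..t (k + 1), β x * (derivWithin e (Icc α (t (k + 1))) x) ^ 2)
          else
            ∫ x in t j..t (j + 1), β x * (derivWithin e (Icc (t j) (t (j + 1))) x) ^ 2) :=
  stmt_12_general n k t α βm βp hk hmono hα hβm hβp β hβ A hA b hb e hea heb hereg heregk1 heregk2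
    horth
end

section
/- Let t₀ < t₁ < t₂ with I₁ = [t₀,t₁], I₂ = [t₁,t₂], and let {φ_{1,1}, φ_{1,2}, φ_{1,3}} and {φ_{2,1}, φ_{2,2}, φ_{2,3}} be the standard quadratic Lagrange bases on I₁ and I₂ (nodes: the two endpoints and the midpoint of each element). Let β, q be continuous on [t₀,t₂] and let e be continuous on [t₀,t₂] and continuously differentiable on I₁ and on I₂. Assume the two orthogonality relations: ∫_{I₂} (β e' φ_{2,2}' + q e φ_{2,2}) dx = 0, and ∫_{I₁} (β e' φ_{1,3}' + q e φ_{1,3}) dx + ∫_{I₂} (β e' φ_{2,1}' + q e φ_{2,1}) dx = 0. Define E₁ = -∫_{I₁} β e' φ_{1,3}' dx - ∫_{I₁} q e φ_{1,3} dx and E₂ = -∫_{I₂} β e' φ_{2,3}' dx - ∫_{I₂} q e φ_{2,3} dx. Then E₂ - E₁ = -∫_{I₂} q e dx. -/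
/-!
Summing the weak form `∫ β e' φ' + q e φ` over the three basis functions of `I₂` tests it
against `∑ φ₂ᵢ = 1`, whose derivative vanishes, so only `∫_{I₂} q e` survives. The midpoint
relation removes the `φ₂,₂` term and the end-node relation identifies the remaining `φ₂,₁`
term with `E₁`, which leaves `E₂ - E₁ = -∫_{I₂} q e`.
-/

open Set intervalIntegral MeasureTheory

theorem lagrange_quadratic_sum_eq_one {a m b : ℝ} (ham : a ≠ m) (hab : a ≠ b) (hmb : m ≠ b)
    (x : ℝ) :
    (x - m) * (x - b) / ((a - m) * (a - b)) + (x - a) * (x - b) / ((m - a) * (m - b))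
      + (x - a) * (x - m) / ((b - a) * (b - m)) = 1 := by
  have := sub_ne_zero.2 ham
  have := sub_ne_zero.2 hab
  have := sub_ne_zero.2 hmb
  have := sub_ne_zero.2 ham.symm
  have := sub_ne_zero.2 hab.symm
  have := sub_ne_zero.2 hmb.symm
  field_simp
  ring

theorem deriv_add_add_eq_zero_of_add_add_eq_one {v₁ v₂ v₃ : ℝ → ℝ}
    (h₁ : Differentiable ℝ v₁) (h₂ : Differentiable ℝ v₂) (h₃ : Differentiable ℝ v₃)
    (hsum : ∀ x, v₁ x + v₂ x + v₃ x = 1) (x : ℝ) :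
    deriv v₁ x + deriv v₂ x + deriv v₃ x = 0 := by
  have hsum' : HasDerivAt (fun x => v₁ x + v₂ x + v₃ x)
      (deriv v₁ x + deriv v₂ x + deriv v₃ x) x :=
    ((h₁ x).hasDerivAt.add (h₂ x).hasDerivAt).add (h₃ x).hasDerivAt
  rw [show (fun x => v₁ x + v₂ x + v₃ x) = fun _ => 1 from funext hsum] at hsum'
  exact hsum'.unique (hasDerivAt_const x 1)

section WeakForm

variable {a b : ℝ} {β q u u' : ℝ → ℝ}

theorem intervalIntegrable_mul_mul_of_continuousOn {f g h : ℝ → ℝ} (hab : a ≤ b)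
    (hf : ContinuousOn f (Icc a b)) (hg : ContinuousOn g (Icc a b)) (hh : Continuous h) :
    IntervalIntegrable (fun x => f x * g x * h x) volume a b :=
  ((hf.mul hg).mul hh.continuousOn).intervalIntegrable_of_Icc hab

theorem integral_weakForm_eq_add {v : ℝ → ℝ} (hab : a ≤ b) (hβ : ContinuousOn β (Icc a b))
    (hq : ContinuousOn q (Icc a b)) (hu : ContinuousOn u (Icc a b))
    (hu' : ContinuousOn u' (Icc a b)) (hv : ContDiff ℝ 1 v) :
    ∫ x in a..b, (β x * u' x * deriv v x + q x * u x * v x)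
      = (∫ x in a..b, β x * u' x * deriv v x) + ∫ x in a..b, q x * u x * v x :=
  integral_add
    (intervalIntegrable_mul_mul_of_continuousOn hab hβ hu' (hv.continuous_deriv le_rfl))
    (intervalIntegrable_mul_mul_of_continuousOn hab hq hu hv.continuous)

theorem intervalIntegrable_weakForm {v : ℝ → ℝ} (hab : a ≤ b) (hβ : ContinuousOn β (Icc a b))
    (hq : ContinuousOn q (Icc a b)) (hu : ContinuousOn u (Icc a b))
    (hu' : ContinuousOn u' (Icc a b)) (hv : ContDiff ℝ 1 v) :
    IntervalIntegrable (fun x => β x * u' x * deriv v x + q x * u x * v x) volume a b :=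
  (intervalIntegrable_mul_mul_of_continuousOn hab hβ hu' (hv.continuous_deriv le_rfl)).add
    (intervalIntegrable_mul_mul_of_continuousOn hab hq hu hv.continuous)

theorem integral_weakForm_add_add_of_add_add_eq_one {v₁ v₂ v₃ : ℝ → ℝ} (hab : a ≤ b)
    (hβ : ContinuousOn β (Icc a b)) (hq : ContinuousOn q (Icc a b))
    (hu : ContinuousOn u (Icc a b)) (hu' : ContinuousOn u' (Icc a b))
    (h₁ : ContDiff ℝ 1 v₁) (h₂ : ContDiff ℝ 1 v₂) (h₃ : ContDiff ℝ 1 v₃)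
    (hsum : ∀ x, v₁ x + v₂ x + v₃ x = 1) :
    (∫ x in a..b, (β x * u' x * deriv v₁ x + q x * u x * v₁ x))
      + (∫ x in a..b, (β x * u' x * deriv v₂ x + q x * u x * v₂ x))
      + (∫ x in a..b, (β x * u' x * deriv v₃ x + q x * u x * v₃ x))
      = ∫ x in a..b, q x * u x := by
  have hint {v : ℝ → ℝ} := intervalIntegrable_weakForm (v := v) hab hβ hq hu hu'
  rw [← integral_add (hint h₁) (hint h₂), ← integral_add ((hint h₁).add (hint h₂)) (hint h₃)]
  refine integral_congr fun x _ => ?_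
  have hderiv := deriv_add_add_eq_zero_of_add_add_eq_one (h₁.differentiable one_ne_zero)
    (h₂.differentiable one_ne_zero) (h₃.differentiable one_ne_zero) hsum x
  linear_combination (β x * u' x) * hderiv + (q x * u x) * hsum x

end WeakForm

theorem stmt_14_general (t0 t1 t2 : ℝ) (h01 : t0 < t1) (h12 : t1 < t2)
    (β q e e1 e2 : ℝ → ℝ)
    (hβ : ContinuousOn β (Icc t0 t2)) (hq : ContinuousOn q (Icc t0 t2))
    (hec : ContinuousOn e (Icc t0 t2))
    (he1c : ContinuousOn e1 (Icc t0 t1))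
    (he2c : ContinuousOn e2 (Icc t1 t2)) :
    let m1 := (t0 + t1) / 2
    let m2 := (t1 + t2) / 2
    -- standard quadratic Lagrange bases on I₁ = [t0,t1] and I₂ = [t1,t2]
    let φ13 : ℝ → ℝ := fun x => ((x - t0) * (x - m1)) / ((t1 - t0) * (t1 - m1))
    let φ21 : ℝ → ℝ := fun x => ((x - m2) * (x - t2)) / ((t1 - m2) * (t1 - t2))
    let φ22 : ℝ → ℝ := fun x => ((x - t1) * (x - t2)) / ((m2 - t1) * (m2 - t2))
    let φ23 : ℝ → ℝ := fun x => ((x - t1) * (x - m2)) / ((t2 - t1) * (t2 - m2))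
    -- orthogonality against the midpoint basis function of I₂
    (∫ x in t1..t2, (β x * e2 x * deriv φ22 x + q x * e x * φ22 x)) = 0 →
    -- orthogonality against the global end-node basis function at t₁
    (∫ x in t0..t1, (β x * e1 x * deriv φ13 x + q x * e x * φ13 x))
      + (∫ x in t1..t2, (β x * e2 x * deriv φ21 x + q x * e x * φ21 x)) = 0 →
    -- conclusion: E₂ - E₁ = -∫_{I₂} q e
    ((-∫ x in t1..t2, β x * e2 x * deriv φ23 x) - ∫ x in t1..t2, q x * e x * φ23 x)
      - ((-∫ x in t0..t1, β x * e1 x * deriv φ13 x) - ∫ x in t0..t1, q x * e x * φ13 x)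
      = -∫ x in t1..t2, q x * e x := by
  intro m1 m2 φ13 φ21 φ22 φ23 hmid hend
  have hI₁ : Icc t0 t1 ⊆ Icc t0 t2 := Icc_subset_Icc le_rfl h12.le
  have hI₂ : Icc t1 t2 ⊆ Icc t0 t2 := Icc_subset_Icc h01.le le_rfl
  have hunity : ∀ x, φ21 x + φ22 x + φ23 x = 1 :=
    lagrange_quadratic_sum_eq_one (by simp only [m2]; linarith) h12.ne
      (by simp only [m2]; linarith)
  have hsum := integral_weakForm_add_add_of_add_add_eq_one h12.le (hβ.mono hI₂) (hq.mono hI₂)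
    (hec.mono hI₂) he2c (by fun_prop : ContDiff ℝ 1 φ21) (by fun_prop : ContDiff ℝ 1 φ22)
    (by fun_prop : ContDiff ℝ 1 φ23) hunity
  rw [integral_weakForm_eq_add h12.le (hβ.mono hI₂) (hq.mono hI₂) (hec.mono hI₂) he2c
    (by fun_prop : ContDiff ℝ 1 φ23)] at hsum
  rw [integral_weakForm_eq_add h01.le (hβ.mono hI₁) (hq.mono hI₁) (hec.mono hI₁) he1c
    (by fun_prop : ContDiff ℝ 1 φ13)] at hend
  linarith

/-- Telescoping identity for the recovered flux errors at consecutive end nodes: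
with the two Galerkin orthogonality relations (midpoint basis of `I₂` and end-node
basis at `t₁`), the flux errors satisfy `E₂ - E₁ = -∫_{I₂} q e`. -/
theorem stmt_14 (t0 t1 t2 : ℝ) (h01 : t0 < t1) (h12 : t1 < t2)
    (β q e e1 e2 : ℝ → ℝ)
    (hβ : ContinuousOn β (Icc t0 t2)) (hq : ContinuousOn q (Icc t0 t2))
    (hec : ContinuousOn e (Icc t0 t2))
    (he1 : ∀ x ∈ Icc t0 t1, HasDerivWithinAt e (e1 x) (Icc t0 t1) x)
    (he1c : ContinuousOn e1 (Icc t0 t1))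
    (he2 : ∀ x ∈ Icc t1 t2, HasDerivWithinAt e (e2 x) (Icc t1 t2) x)
    (he2c : ContinuousOn e2 (Icc t1 t2)) :
    let m1 := (t0 + t1) / 2
    let m2 := (t1 + t2) / 2
    -- standard quadratic Lagrange bases on I₁ = [t0,t1] and I₂ = [t1,t2]
    let φ13 : ℝ → ℝ := fun x => ((x - t0) * (x - m1)) / ((t1 - t0) * (t1 - m1))
    let φ21 : ℝ → ℝ := fun x => ((x - m2) * (x - t2)) / ((t1 - m2) * (t1 - t2))
    let φ22 : ℝ → ℝ := fun x => ((x - t1) * (x - t2)) / ((m2 - t1) * (m2 - t2))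
    let φ23 : ℝ → ℝ := fun x => ((x - t1) * (x - m2)) / ((t2 - t1) * (t2 - m2))
    -- orthogonality against the midpoint basis function of I₂
    (∫ x in t1..t2, (β x * e2 x * deriv φ22 x + q x * e x * φ22 x)) = 0 →
    -- orthogonality against the global end-node basis function at t₁
    (∫ x in t0..t1, (β x * e1 x * deriv φ13 x + q x * e x * φ13 x))
      + (∫ x in t1..t2, (β x * e2 x * deriv φ21 x + q x * e x * φ21 x)) = 0 →
    -- conclusion: E₂ - E₁ = -∫_{I₂} q e
    ((-∫ x in t1..t2, β x * e2 x * deriv φ23 x) - ∫ x in t1..t2, q x * e x * φ23 x)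
      - ((-∫ x in t0..t1, β x * e1 x * deriv φ13 x) - ∫ x in t0..t1, q x * e x * φ13 x)
      = -∫ x in t1..t2, q x * e x :=
  stmt_14_general t0 t1 t2 h01 h12 β q e e1 e2 hβ hq hec he1c he2c
end
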